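/- arXiv:1809.07885 — 4 statements merged into one kernel-verified Lean document; each statement's English description precedes it below -/
import Mathlib

section
/- Lax pair compatibility is equivalent to Yang's equation: let Ω ⊆ {(ρ,z) ∈ ℝ² : ρ > 0} be open and J : Ω → GL(n,ℂ) twice continuously differentiable. For F(ρ,z,λ) taking values in ℂⁿ, defined for (ρ,z) ∈ Ω and λ ∈ ℂ∖{0}, twice continuously differentiable in (ρ,z) and holomorphic in λ, define L₁F = ∂_ρF + iλ∂_zF + (λ/ρ)∂_λF + iλ(J⁻¹∂_zJ)F and L₂F = i∂_zF + λ∂_ρF − (λ²/ρ)∂_λF + λ(J⁻¹∂_ρJ)F. Then the identity L₁(L₂F) − L₂(L₁F) = (λ/ρ)L₁F holds for every such F at every point (ρ,z,λ) if and only if J satisfies Yang's equation ∂_ρ(ρ J⁻¹∂_ρJ) + ∂_z(ρ J⁻¹∂_zJ) = 0 on Ω. -/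
attribute [local instance] Matrix.normedAddCommGroup Matrix.normedSpace

/-- Test functions for the Lax pair: `F(ρ,z,λ)`, with values in `ℂⁿ`, twice
continuously differentiable in the real sense on `Ω × (ℂ ∖ {0})` and
holomorphic in `λ` there. -/
def LaxTest (n : ℕ) (Ω : Set (ℝ × ℝ)) (F : ℝ → ℝ → ℂ → (Fin n → ℂ)) : Prop :=
  ContDiffOn ℝ 2 (fun p : ℝ × ℝ × ℂ => F p.1 p.2.1 p.2.2)
      {p : ℝ × ℝ × ℂ | (p.1, p.2.1) ∈ Ω ∧ p.2.2 ≠ 0} ∧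
  ∀ ρ z : ℝ, (ρ, z) ∈ Ω → ∀ l : ℂ, l ≠ 0 →
    DifferentiableAt ℂ (fun w : ℂ => F ρ z w) l

/-- The Lax operator `L₁ = ∂_ρ + iλ∂_z + (λ/ρ)∂_λ + iλ(J⁻¹∂_zJ)`. -/
noncomputable def LaxL1 (n : ℕ) (J : ℝ → ℝ → Matrix (Fin n) (Fin n) ℂ)
    (F : ℝ → ℝ → ℂ → (Fin n → ℂ)) (ρ z : ℝ) (l : ℂ) : Fin n → ℂ :=
  deriv (fun r : ℝ => F r z l) ρ
    + (Complex.I * l) • deriv (fun z' : ℝ => F ρ z' l) z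
    + (l / (ρ : ℂ)) • deriv (fun w : ℂ => F ρ z w) l
    + (Complex.I * l) •
        Matrix.mulVec ((J ρ z)⁻¹ * deriv (fun z' : ℝ => J ρ z') z) (F ρ z l)

/-- The Lax operator `L₂ = i∂_z + λ∂_ρ − (λ²/ρ)∂_λ + λ(J⁻¹∂_ρJ)`. -/
noncomputable def LaxL2 (n : ℕ) (J : ℝ → ℝ → Matrix (Fin n) (Fin n) ℂ)
    (F : ℝ → ℝ → ℂ → (Fin n → ℂ)) (ρ z : ℝ) (l : ℂ) : Fin n → ℂ :=
  Complex.I • deriv (fun z' : ℝ => F ρ z' l) z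
    + l • deriv (fun r : ℝ => F r z l) ρ
    - (l ^ 2 / (ρ : ℂ)) • deriv (fun w : ℂ => F ρ z w) l
    + l • Matrix.mulVec ((J ρ z)⁻¹ * deriv (fun r : ℝ => J r z) ρ) (F ρ z l)

/-!
Write `L₁ = V₁ + M₁` and `L₂ = V₂ + M₂` with `M₁ = iλA`, `M₂ = λB`, `A = J⁻¹∂_zJ`,
`B = J⁻¹∂_ρJ`. Since the `Vᵢ` are derivations,
`[L₁, L₂] = [V₁, V₂] + (V₁M₂ - V₂M₁ + [M₁, M₂])`. Mixed partials of a `C²` function commute, so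
the Lie bracket is computed from the coefficients alone: `[V₁, V₂] = (λ/ρ)V₁`. The connection
`J⁻¹dJ` is flat, `∂_zB - ∂_ρA = [B, A]`, which kills the `λ²` terms of the potential part and leaves
`(λ/ρ)M₁ + (λ/ρ)(∂_ρ(ρB) + ∂_z(ρA))`. Hence `L₁L₂F - L₂L₁F - (λ/ρ)L₁F` is `λ/ρ` times Yang's
operator applied to `F`, and constant test functions `F` detect every entry of that operator.
-/

open Matrix Topology

section MatrixCalculus

variable {𝕜 : Type*} [NontriviallyNormedField 𝕜] {k m n : Type*} [Fintype m] [Fintype n]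
  {t : 𝕜}

section NormedRing

variable {R : Type*} [NormedRing R] [NormedAlgebra 𝕜 R]

theorem hasDerivAt_matrix_iff {A : 𝕜 → Matrix k n R} {A' : Matrix k n R} :
    HasDerivAt A A' t ↔ ∀ i j, HasDerivAt (fun t => A t i j) (A' i j) t :=
  hasDerivAt_pi.trans (forall_congr' fun _ => hasDerivAt_pi)

theorem differentiableAt_matrix_iff {A : 𝕜 → Matrix k n R} :
    DifferentiableAt 𝕜 A t ↔ ∀ i j, DifferentiableAt 𝕜 (fun t => A t i j) t :=
  differentiableAt_pi.trans (forall_congr' fun _ => differentiableAt_pi)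

theorem HasDerivAt.matrix_mul {A : 𝕜 → Matrix k m R} {B : 𝕜 → Matrix m n R}
    {A' : Matrix k m R} {B' : Matrix m n R} (hA : HasDerivAt A A' t) (hB : HasDerivAt B B' t) :
    HasDerivAt (fun t => A t * B t) (A' * B t + A t * B') t := by
  rw [hasDerivAt_matrix_iff] at hA hB ⊢
  intro i j
  simpa only [mul_apply, Matrix.add_apply, Pi.mul_apply, Finset.sum_add_distrib] using
    HasDerivAt.fun_sum fun l _ => (hA i l).mul (hB l j)

theorem HasDerivAt.matrix_mulVec {A : 𝕜 → Matrix k m R} {x : 𝕜 → m → R}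
    {A' : Matrix k m R} {x' : m → R} (hA : HasDerivAt A A' t) (hx : HasDerivAt x x' t) :
    HasDerivAt (fun t => A t *ᵥ x t) (A' *ᵥ x t + A t *ᵥ x') t := by
  rw [hasDerivAt_matrix_iff] at hA
  rw [hasDerivAt_pi] at hx ⊢
  intro i
  simpa only [mulVec, dotProduct, Pi.add_apply, Pi.mul_apply, Finset.sum_add_distrib] using
    HasDerivAt.fun_sum fun l _ => (hA i l).mul (hx l)

end NormedRing

variable [DecidableEq n]

theorem DifferentiableAt.matrix_det {R : Type*} [NormedCommRing R] [NormedAlgebra 𝕜 R]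
    {A : 𝕜 → Matrix n n R} (hA : DifferentiableAt 𝕜 A t) :
    DifferentiableAt 𝕜 (fun t => (A t).det) t := by
  rw [differentiableAt_matrix_iff] at hA
  simp only [det_apply, Units.smul_def, zsmul_eq_mul]
  fun_prop

theorem DifferentiableAt.matrix_adjugate {R : Type*} [NormedCommRing R] [NormedAlgebra 𝕜 R]
    {A : 𝕜 → Matrix n n R} (hA : DifferentiableAt 𝕜 A t) :
    DifferentiableAt 𝕜 (fun t => (A t).adjugate) t := by
  rw [differentiableAt_matrix_iff] at hA ⊢
  intro i j
  simp only [adjugate_apply]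
  refine DifferentiableAt.matrix_det (differentiableAt_matrix_iff.2 fun k l => ?_)
  by_cases hk : k = j
  · subst hk; simpa only [updateRow_self] using differentiableAt_const _
  · simpa only [updateRow_ne hk] using hA k l

variable {R : Type*} [NormedField R] [NormedAlgebra 𝕜 R]

theorem DifferentiableAt.matrix_inv {A : 𝕜 → Matrix n n R} (hA : DifferentiableAt 𝕜 A t)
    (hu : IsUnit (A t)) : DifferentiableAt 𝕜 (fun t => (A t)⁻¹) t := by
  simp only [inv_def, Ring.inverse_eq_inv]
  exact (hA.matrix_det.inv ((isUnit_iff_isUnit_det _).1 hu).ne_zero).smul hA.matrix_adjugate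

theorem HasDerivAt.matrix_inv {A : 𝕜 → Matrix n n R} {A' : Matrix n n R}
    (hA : HasDerivAt A A' t) (hu : IsUnit (A t)) :
    HasDerivAt (fun t => (A t)⁻¹) (-((A t)⁻¹ * A' * (A t)⁻¹)) t := by
  obtain ⟨D, hD⟩ : ∃ D, HasDerivAt (fun t => (A t)⁻¹) D t :=
    ⟨_, (hA.differentiableAt.matrix_inv hu).hasDerivAt⟩
  -- `A⁻¹ * A * A⁻¹ = A⁻¹` holds for every matrix, so it can be differentiated without
  -- knowing that `A` stays invertible near `t`.
  have hid : (fun t => (A t)⁻¹ * A t * (A t)⁻¹) = fun t => (A t)⁻¹ := by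
    funext s
    by_cases hs : IsUnit (A s).det
    · rw [nonsing_inv_mul _ hs, one_mul]
    · rw [nonsing_inv_apply_not_isUnit _ hs, zero_mul, zero_mul]
  have h := ((hD.matrix_mul hA).matrix_mul hD).unique (hid ▸ hD)
  have hKA : (A t)⁻¹ * A t = 1 := nonsing_inv_mul _ ((isUnit_iff_isUnit_det _).1 hu)
  have hAK : A t * (A t)⁻¹ = 1 := mul_nonsing_inv _ ((isUnit_iff_isUnit_det _).1 hu)
  rw [Matrix.add_mul, hKA, Matrix.one_mul, Matrix.mul_assoc D, hAK, Matrix.mul_one] at h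
  exact eq_neg_of_add_eq_zero_left (add_eq_right.mp h) ▸ hD

end MatrixCalculus

section SlicePartials

variable {W : Type*} [NormedAddCommGroup W] [NormedSpace ℂ W]

noncomputable def partialRho (G : ℝ → ℝ → ℂ → W) (ρ z : ℝ) (l : ℂ) : W :=
  deriv (fun r => G r z l) ρ

noncomputable def partialZ (G : ℝ → ℝ → ℂ → W) (ρ z : ℝ) (l : ℂ) : W :=
  deriv (fun t => G ρ t l) z

noncomputable def partialLam (G : ℝ → ℝ → ℂ → W) (ρ z : ℝ) (l : ℂ) : W :=
  deriv (fun w => G ρ z w) l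

structure SliceDifferentiableAt (G : ℝ → ℝ → ℂ → W) (ρ z : ℝ) (l : ℂ) : Prop where
  differentiableAt_rho : DifferentiableAt ℝ (fun r => G r z l) ρ
  differentiableAt_z : DifferentiableAt ℝ (fun t => G ρ t l) z
  differentiableAt_lam : DifferentiableAt ℂ (fun w => G ρ z w) l

structure PartialsCommuteAt (G : ℝ → ℝ → ℂ → W) (ρ z : ℝ) (l : ℂ) : Prop where
  rho_z : partialZ (partialRho G) ρ z l = partialRho (partialZ G) ρ z l
  rho_lam : partialLam (partialRho G) ρ z l = partialRho (partialLam G) ρ z l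
  z_lam : partialLam (partialZ G) ρ z l = partialZ (partialLam G) ρ z l

noncomputable def vecField (a b c : ℝ → ℝ → ℂ → ℂ) (G : ℝ → ℝ → ℂ → W) (ρ z : ℝ) (l : ℂ) : W :=
  a ρ z l • partialRho G ρ z l + b ρ z l • partialZ G ρ z l + c ρ z l • partialLam G ρ z l

variable {G H : ℝ → ℝ → ℂ → W} {φ : ℝ → ℝ → ℂ → ℂ} {ρ z : ℝ} {l : ℂ}

namespace SliceDifferentiableAt

theorem add (hG : SliceDifferentiableAt G ρ z l) (hH : SliceDifferentiableAt H ρ z l) :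
    SliceDifferentiableAt (fun r t w => G r t w + H r t w) ρ z l :=
  ⟨hG.differentiableAt_rho.add hH.differentiableAt_rho,
    hG.differentiableAt_z.add hH.differentiableAt_z,
    hG.differentiableAt_lam.add hH.differentiableAt_lam⟩

theorem smul (hφ : SliceDifferentiableAt φ ρ z l) (hG : SliceDifferentiableAt G ρ z l) :
    SliceDifferentiableAt (fun r t w => φ r t w • G r t w) ρ z l :=
  ⟨hφ.differentiableAt_rho.smul hG.differentiableAt_rho,
    hφ.differentiableAt_z.smul hG.differentiableAt_z,
    hφ.differentiableAt_lam.smul hG.differentiableAt_lam⟩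

variable {m : Type*} [Fintype m] {M N : ℝ → ℝ → ℂ → Matrix m m ℂ} {v : ℝ → ℝ → ℂ → m → ℂ}

theorem mulVec (hM : SliceDifferentiableAt M ρ z l) (hv : SliceDifferentiableAt v ρ z l) :
    SliceDifferentiableAt (fun r t w => M r t w *ᵥ v r t w) ρ z l :=
  ⟨(hM.differentiableAt_rho.hasDerivAt.matrix_mulVec
      hv.differentiableAt_rho.hasDerivAt).differentiableAt,
    (hM.differentiableAt_z.hasDerivAt.matrix_mulVec
      hv.differentiableAt_z.hasDerivAt).differentiableAt,
    (hM.differentiableAt_lam.hasDerivAt.matrix_mulVec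
      hv.differentiableAt_lam.hasDerivAt).differentiableAt⟩

theorem matrix_mul (hM : SliceDifferentiableAt M ρ z l) (hN : SliceDifferentiableAt N ρ z l) :
    SliceDifferentiableAt (fun r t w => M r t w * N r t w) ρ z l :=
  ⟨(hM.differentiableAt_rho.hasDerivAt.matrix_mul
      hN.differentiableAt_rho.hasDerivAt).differentiableAt,
    (hM.differentiableAt_z.hasDerivAt.matrix_mul
      hN.differentiableAt_z.hasDerivAt).differentiableAt,
    (hM.differentiableAt_lam.hasDerivAt.matrix_mul
      hN.differentiableAt_lam.hasDerivAt).differentiableAt⟩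

theorem matrix_inv [DecidableEq m] (hM : SliceDifferentiableAt M ρ z l)
    (hu : IsUnit (M ρ z l)) : SliceDifferentiableAt (fun r t w => (M r t w)⁻¹) ρ z l :=
  ⟨hM.differentiableAt_rho.matrix_inv hu, hM.differentiableAt_z.matrix_inv hu,
    hM.differentiableAt_lam.matrix_inv hu⟩

theorem vecField {a b c : ℝ → ℝ → ℂ → ℂ} (ha : SliceDifferentiableAt a ρ z l)
    (hb : SliceDifferentiableAt b ρ z l) (hc : SliceDifferentiableAt c ρ z l)
    (hGρ : SliceDifferentiableAt (partialRho G) ρ z l)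
    (hGz : SliceDifferentiableAt (partialZ G) ρ z l)
    (hGl : SliceDifferentiableAt (partialLam G) ρ z l) :
    SliceDifferentiableAt (vecField a b c G) ρ z l :=
  ((ha.smul hGρ).add (hb.smul hGz)).add (hc.smul hGl)

end SliceDifferentiableAt

theorem vecField_add {a b c : ℝ → ℝ → ℂ → ℂ} (hG : SliceDifferentiableAt G ρ z l)
    (hH : SliceDifferentiableAt H ρ z l) :
    vecField a b c (fun r t w => G r t w + H r t w) ρ z l
      = vecField a b c G ρ z l + vecField a b c H ρ z l := by
  simp only [vecField, partialRho, partialZ, partialLam,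
    deriv_fun_add hG.differentiableAt_rho hH.differentiableAt_rho,
    deriv_fun_add hG.differentiableAt_z hH.differentiableAt_z,
    deriv_fun_add hG.differentiableAt_lam hH.differentiableAt_lam]
  module

theorem vecField_smul {a b c : ℝ → ℝ → ℂ → ℂ} (hφ : SliceDifferentiableAt φ ρ z l)
    (hG : SliceDifferentiableAt G ρ z l) :
    vecField a b c (fun r t w => φ r t w • G r t w) ρ z l
      = vecField a b c φ ρ z l • G ρ z l + φ ρ z l • vecField a b c G ρ z l := by
  simp only [vecField, partialRho, partialZ, partialLam,
    deriv_fun_smul hφ.differentiableAt_rho hG.differentiableAt_rho,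
    deriv_fun_smul hφ.differentiableAt_z hG.differentiableAt_z,
    deriv_fun_smul hφ.differentiableAt_lam hG.differentiableAt_lam]
  module

theorem vecField_mulVec {m : Type*} [Fintype m] {a b c : ℝ → ℝ → ℂ → ℂ}
    {M : ℝ → ℝ → ℂ → Matrix m m ℂ} {v : ℝ → ℝ → ℂ → m → ℂ}
    (hM : SliceDifferentiableAt M ρ z l) (hv : SliceDifferentiableAt v ρ z l) :
    vecField a b c (fun r t w => M r t w *ᵥ v r t w) ρ z l
      = vecField a b c M ρ z l *ᵥ v ρ z l + M ρ z l *ᵥ vecField a b c v ρ z l := by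
  simp only [vecField, partialRho, partialZ, partialLam,
    (hM.differentiableAt_rho.hasDerivAt.matrix_mulVec hv.differentiableAt_rho.hasDerivAt).deriv,
    (hM.differentiableAt_z.hasDerivAt.matrix_mulVec hv.differentiableAt_z.hasDerivAt).deriv,
    (hM.differentiableAt_lam.hasDerivAt.matrix_mulVec hv.differentiableAt_lam.hasDerivAt).deriv,
    add_mulVec, mulVec_add, smul_mulVec, mulVec_smul]
  module

theorem vecField_vecField {a b c a' b' c' : ℝ → ℝ → ℂ → ℂ}
    (ha' : SliceDifferentiableAt a' ρ z l) (hb' : SliceDifferentiableAt b' ρ z l)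
    (hc' : SliceDifferentiableAt c' ρ z l) (hGρ : SliceDifferentiableAt (partialRho G) ρ z l)
    (hGz : SliceDifferentiableAt (partialZ G) ρ z l)
    (hGl : SliceDifferentiableAt (partialLam G) ρ z l) :
    vecField a b c (vecField a' b' c' G) ρ z l
      = vecField a b c a' ρ z l • partialRho G ρ z l
          + a' ρ z l • vecField a b c (partialRho G) ρ z l
        + (vecField a b c b' ρ z l • partialZ G ρ z l
          + b' ρ z l • vecField a b c (partialZ G) ρ z l)
        + (vecField a b c c' ρ z l • partialLam G ρ z l
          + c' ρ z l • vecField a b c (partialLam G) ρ z l) := by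
  rw [show vecField a' b' c' G = fun r t w => a' r t w • partialRho G r t w
      + b' r t w • partialZ G r t w + c' r t w • partialLam G r t w from rfl,
    vecField_add ((ha'.smul hGρ).add (hb'.smul hGz)) (hc'.smul hGl),
    vecField_add (ha'.smul hGρ) (hb'.smul hGz), vecField_smul ha' hGρ, vecField_smul hb' hGz,
    vecField_smul hc' hGl]

/-- The Lie bracket of two vector fields, in coordinates. -/
theorem vecField_comm_sub {a₁ b₁ c₁ a₂ b₂ c₂ : ℝ → ℝ → ℂ → ℂ}
    (ha₁ : SliceDifferentiableAt a₁ ρ z l) (hb₁ : SliceDifferentiableAt b₁ ρ z l)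
    (hc₁ : SliceDifferentiableAt c₁ ρ z l) (ha₂ : SliceDifferentiableAt a₂ ρ z l)
    (hb₂ : SliceDifferentiableAt b₂ ρ z l) (hc₂ : SliceDifferentiableAt c₂ ρ z l)
    (hGρ : SliceDifferentiableAt (partialRho G) ρ z l)
    (hGz : SliceDifferentiableAt (partialZ G) ρ z l)
    (hGl : SliceDifferentiableAt (partialLam G) ρ z l) (hG : PartialsCommuteAt G ρ z l) :
    vecField a₁ b₁ c₁ (vecField a₂ b₂ c₂ G) ρ z l - vecField a₂ b₂ c₂ (vecField a₁ b₁ c₁ G) ρ z l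
      = (vecField a₁ b₁ c₁ a₂ ρ z l - vecField a₂ b₂ c₂ a₁ ρ z l) • partialRho G ρ z l
        + (vecField a₁ b₁ c₁ b₂ ρ z l - vecField a₂ b₂ c₂ b₁ ρ z l) • partialZ G ρ z l
        + (vecField a₁ b₁ c₁ c₂ ρ z l - vecField a₂ b₂ c₂ c₁ ρ z l) • partialLam G ρ z l := by
  rw [vecField_vecField ha₂ hb₂ hc₂ hGρ hGz hGl, vecField_vecField ha₁ hb₁ hc₁ hGρ hGz hGl]
  simp only [vecField, hG.rho_z, hG.rho_lam, hG.z_lam]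
  module

section LaxOperator

variable {m : Type*} [Fintype m]

noncomputable def laxOp (a b c : ℝ → ℝ → ℂ → ℂ) (M : ℝ → ℝ → ℂ → Matrix m m ℂ)
    (v : ℝ → ℝ → ℂ → m → ℂ) (ρ z : ℝ) (l : ℂ) : m → ℂ :=
  vecField a b c v ρ z l + M ρ z l *ᵥ v ρ z l

theorem laxOp_comm_sub {a₁ b₁ c₁ a₂ b₂ c₂ : ℝ → ℝ → ℂ → ℂ} {M₁ M₂ : ℝ → ℝ → ℂ → Matrix m m ℂ}
    {v : ℝ → ℝ → ℂ → m → ℂ} (hM₁ : SliceDifferentiableAt M₁ ρ z l)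
    (hM₂ : SliceDifferentiableAt M₂ ρ z l) (hv : SliceDifferentiableAt v ρ z l)
    (hv₁ : SliceDifferentiableAt (vecField a₁ b₁ c₁ v) ρ z l)
    (hv₂ : SliceDifferentiableAt (vecField a₂ b₂ c₂ v) ρ z l) :
    laxOp a₁ b₁ c₁ M₁ (laxOp a₂ b₂ c₂ M₂ v) ρ z l - laxOp a₂ b₂ c₂ M₂ (laxOp a₁ b₁ c₁ M₁ v) ρ z l
      = (vecField a₁ b₁ c₁ (vecField a₂ b₂ c₂ v) ρ z l
          - vecField a₂ b₂ c₂ (vecField a₁ b₁ c₁ v) ρ z l)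
        + (vecField a₁ b₁ c₁ M₂ ρ z l - vecField a₂ b₂ c₂ M₁ ρ z l
          + (M₁ ρ z l * M₂ ρ z l - M₂ ρ z l * M₁ ρ z l)) *ᵥ v ρ z l := by
  unfold laxOp
  rw [vecField_add hv₂ (hM₂.mulVec hv), vecField_add hv₁ (hM₁.mulVec hv), vecField_mulVec hM₂ hv,
    vecField_mulVec hM₁ hv]
  simp only [mulVec_add, add_mulVec, sub_mulVec, mulVec_mulVec]
  abel

end LaxOperator

end SlicePartials

section SliceDerivatives

variable {W : Type*} [NormedAddCommGroup W] [NormedSpace ℂ W]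

def uncurry3 (G : ℝ → ℝ → ℂ → W) (p : ℝ × ℝ × ℂ) : W := G p.1 p.2.1 p.2.2

structure HasSliceDerivAt (G : ℝ → ℝ → ℂ → W) (gρ gz gl : W) (ρ z : ℝ) (l : ℂ) : Prop where
  hasDerivAt_rho : HasDerivAt (fun r => G r z l) gρ ρ
  hasDerivAt_z : HasDerivAt (fun t => G ρ t l) gz z
  hasDerivAt_lam : HasDerivAt (fun w => G ρ z w) gl l

variable {G G' : ℝ → ℝ → ℂ → W} {gρ gz gl : W} {ρ z : ℝ} {l : ℂ}

namespace HasSliceDerivAt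

variable (h : HasSliceDerivAt G gρ gz gl ρ z l)
include h

theorem sliceDifferentiableAt : SliceDifferentiableAt G ρ z l :=
  ⟨h.hasDerivAt_rho.differentiableAt, h.hasDerivAt_z.differentiableAt,
    h.hasDerivAt_lam.differentiableAt⟩

theorem partialRho_eq : partialRho G ρ z l = gρ := h.hasDerivAt_rho.deriv

theorem partialZ_eq : partialZ G ρ z l = gz := h.hasDerivAt_z.deriv

theorem partialLam_eq : partialLam G ρ z l = gl := h.hasDerivAt_lam.deriv

theorem vecField_eq (a b c : ℝ → ℝ → ℂ → ℂ) :
    vecField a b c G ρ z l = a ρ z l • gρ + b ρ z l • gz + c ρ z l • gl := by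
  rw [vecField, h.partialRho_eq, h.partialZ_eq, h.partialLam_eq]

theorem congr_of_eventuallyEq (e : uncurry3 G' =ᶠ[𝓝 (ρ, z, l)] uncurry3 G) :
    HasSliceDerivAt G' gρ gz gl ρ z l :=
  ⟨h.hasDerivAt_rho.congr_of_eventuallyEq
      (e.comp_tendsto (by fun_prop : Continuous fun r : ℝ => (r, z, l)).continuousAt),
    h.hasDerivAt_z.congr_of_eventuallyEq
      (e.comp_tendsto (by fun_prop : Continuous fun t : ℝ => (ρ, t, l)).continuousAt),
    h.hasDerivAt_lam.congr_of_eventuallyEq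
      (e.comp_tendsto (by fun_prop : Continuous fun w : ℂ => (ρ, z, w)).continuousAt)⟩

end HasSliceDerivAt

theorem hasSliceDerivAt_const (c : W) : HasSliceDerivAt (fun _ _ _ => c) 0 0 0 ρ z l :=
  ⟨hasDerivAt_const _ _, hasDerivAt_const _ _, hasDerivAt_const _ _⟩

noncomputable def lamLine : ℂ →L[ℝ] ℝ × ℝ × ℂ :=
  (ContinuousLinearMap.inr ℝ ℝ (ℝ × ℂ)).comp (ContinuousLinearMap.inr ℝ ℝ ℂ)

theorem lamLine_apply (w : ℂ) : lamLine w = (0, 0, w) := rfl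

theorem HasFDerivAt.hasFDerivAt_lam {Φ : ℝ × ℝ × ℂ → W} {Φ' : ℝ × ℝ × ℂ →L[ℝ] W}
    (h : HasFDerivAt Φ Φ' (ρ, z, l)) :
    HasFDerivAt (fun w => Φ (ρ, z, w)) (Φ'.comp lamLine) l :=
  h.comp l ((hasFDerivAt_prodMk_right ρ (z, l)).comp l (hasFDerivAt_prodMk_right z l))

theorem HasFDerivAt.hasSliceDerivAt {Φ : ℝ × ℝ × ℂ → W} {Φ' : ℝ × ℝ × ℂ →L[ℝ] W}
    (h : HasFDerivAt Φ Φ' (ρ, z, l)) (hlin : ∀ w : ℂ, Φ' (0, 0, w) = w • Φ' (0, 0, 1)) :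
    HasSliceDerivAt (fun r t w => Φ (r, t, w)) (Φ' (1, 0, 0)) (Φ' (0, 1, 0)) (Φ' (0, 0, 1))
      ρ z l := by
  refine ⟨?_, ?_, ?_⟩
  · simpa [Function.comp_def, Prod.mk_zero_zero] using
      h.comp_hasDerivAt ρ ((hasDerivAt_id ρ).prodMk (hasDerivAt_const ρ (z, l)))
  · simpa [Function.comp_def] using h.comp_hasDerivAt z
      ((hasDerivAt_const z ρ).prodMk ((hasDerivAt_id z).prodMk (hasDerivAt_const z l)))
  · refine hasDerivAt_iff_hasFDerivAt.2 (hasFDerivAt_of_restrictScalars ℝ h.hasFDerivAt_lam ?_)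
    ext1 w
    simp [lamLine_apply, hlin w]

end SliceDerivatives

section ContDiffHolomorphic

variable {W : Type*} [NormedAddCommGroup W] [NormedSpace ℂ W]

def IsC2HolOn (G : ℝ → ℝ → ℂ → W) (U : Set (ℝ × ℝ × ℂ)) : Prop :=
  ContDiffOn ℝ 2 (uncurry3 G) U ∧
    ∀ p ∈ U, DifferentiableAt ℂ (fun w => G p.1 p.2.1 w) p.2.2

namespace IsC2HolOn

variable {G : ℝ → ℝ → ℂ → W} {U : Set (ℝ × ℝ × ℂ)} {q : ℝ × ℝ × ℂ} {ρ z : ℝ} {l : ℂ}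
  (hU : IsOpen U) (hG : IsC2HolOn G U)
include hU hG

theorem hasFDerivAt (hq : q ∈ U) :
    HasFDerivAt (uncurry3 G) (fderiv ℝ (uncurry3 G) q) q :=
  ((hG.1.contDiffAt (hU.mem_nhds hq)).differentiableAt two_ne_zero).hasFDerivAt

theorem hasFDerivAt_fderiv (hq : q ∈ U) :
    HasFDerivAt (fderiv ℝ (uncurry3 G)) (fderiv ℝ (fderiv ℝ (uncurry3 G)) q) q :=
  (((hG.1.contDiffAt (hU.mem_nhds hq)).fderiv_right (m := 1) (by norm_num)).differentiableAt
    one_ne_zero).hasFDerivAt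

theorem fderiv_fderiv_symm (hq : q ∈ U) (v w : ℝ × ℝ × ℂ) :
    fderiv ℝ (fderiv ℝ (uncurry3 G)) q v w
      = fderiv ℝ (fderiv ℝ (uncurry3 G)) q w v :=
  (hG.1.contDiffAt (hU.mem_nhds hq)).isSymmSndFDerivAt (by simp) v w

theorem fderiv_lamLine (hq : q ∈ U) (w : ℂ) :
    fderiv ℝ (uncurry3 G) q (0, 0, w)
      = w • fderiv ℝ (uncurry3 G) q (0, 0, 1) := by
  have h := (hasFDerivAt hU hG hq).hasFDerivAt_lam.unique
    (((hG.2 q hq).hasDerivAt.hasFDerivAt).restrictScalars ℝ)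
  have hw := congrArg (· w) h
  have h1 := congrArg (· 1) h
  simp only [ContinuousLinearMap.comp_apply, lamLine_apply,
    ContinuousLinearMap.coe_restrictScalars',
    ContinuousLinearMap.toSpanSingleton_apply, one_smul] at hw h1
  rw [hw, h1]

theorem fderiv_fderiv_lamLine (hq : q ∈ U) (w : ℂ) (v : ℝ × ℝ × ℂ) :
    fderiv ℝ (fderiv ℝ (uncurry3 G)) q (0, 0, w) v
      = w • fderiv ℝ (fderiv ℝ (uncurry3 G)) q (0, 0, 1) v := by
  -- With `D = fderiv ℝ (uncurry3 G)`, `D² q v (0, 0, w)` is the derivative along `v` of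
  -- `p ↦ D p (0, 0, w) = w • D p (0, 0, 1)`; symmetry of `D² q` moves `(0, 0, w)` to the front.
  have hA (x : ℝ × ℝ × ℂ) := (ContinuousLinearMap.apply ℝ W x).hasFDerivAt.comp q
    (hasFDerivAt_fderiv hU hG hq)
  have e : (fun p => fderiv ℝ (uncurry3 G) p (0, 0, w))
      =ᶠ[𝓝 q] fun p => w • fderiv ℝ (uncurry3 G) p (0, 0, 1) := by
    filter_upwards [hU.mem_nhds hq] with p hp using fderiv_lamLine hU hG hp w
  have h := congrArg (· v)
    ((hA (0, 0, w)).unique (((hA (0, 0, 1)).const_smul w).congr_of_eventuallyEq e))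
  simp only [ContinuousLinearMap.comp_apply, ContinuousLinearMap.apply_apply,
    _root_.smul_apply] at h
  rw [fderiv_fderiv_symm hU hG hq, h, fderiv_fderiv_symm hU hG hq v]

theorem hasSliceDerivAt (hp : (ρ, z, l) ∈ U) :
    HasSliceDerivAt G (fderiv ℝ (uncurry3 G) (ρ, z, l) (1, 0, 0))
      (fderiv ℝ (uncurry3 G) (ρ, z, l) (0, 1, 0))
      (fderiv ℝ (uncurry3 G) (ρ, z, l) (0, 0, 1)) ρ z l :=
  (hasFDerivAt hU hG hp).hasSliceDerivAt (fderiv_lamLine hU hG hp)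

theorem hasSliceDerivAt_of_eqOn_fderiv (hp : (ρ, z, l) ∈ U) (x : ℝ × ℝ × ℂ)
    {G' : ℝ → ℝ → ℂ → W}
    (hG' : ∀ q ∈ U, uncurry3 G' q = fderiv ℝ (uncurry3 G) q x) :
    HasSliceDerivAt G'
      (fderiv ℝ (fderiv ℝ (uncurry3 G)) (ρ, z, l) (1, 0, 0) x)
      (fderiv ℝ (fderiv ℝ (uncurry3 G)) (ρ, z, l) (0, 1, 0) x)
      (fderiv ℝ (fderiv ℝ (uncurry3 G)) (ρ, z, l) (0, 0, 1) x)
      ρ z l := by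
  refine (((ContinuousLinearMap.apply ℝ W x).hasFDerivAt.comp _
    (hasFDerivAt_fderiv hU hG hp)).hasSliceDerivAt fun w => fderiv_fderiv_lamLine hU hG hp w x
    :).congr_of_eventuallyEq ?_
  filter_upwards [hU.mem_nhds hp] with q hq using hG' q hq

theorem sliceDifferentiableAt (hp : (ρ, z, l) ∈ U) : SliceDifferentiableAt G ρ z l :=
  (hasSliceDerivAt hU hG hp).sliceDifferentiableAt

theorem sliceDifferentiableAt_partialRho (hp : (ρ, z, l) ∈ U) :
    SliceDifferentiableAt (partialRho G) ρ z l :=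
  (hasSliceDerivAt_of_eqOn_fderiv hU hG hp _ (G' := partialRho G) fun _ hq =>
    (hasSliceDerivAt hU hG hq).partialRho_eq).sliceDifferentiableAt

theorem sliceDifferentiableAt_partialZ (hp : (ρ, z, l) ∈ U) :
    SliceDifferentiableAt (partialZ G) ρ z l :=
  (hasSliceDerivAt_of_eqOn_fderiv hU hG hp _ (G' := partialZ G) fun _ hq =>
    (hasSliceDerivAt hU hG hq).partialZ_eq).sliceDifferentiableAt

theorem sliceDifferentiableAt_partialLam (hp : (ρ, z, l) ∈ U) :
    SliceDifferentiableAt (partialLam G) ρ z l :=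
  (hasSliceDerivAt_of_eqOn_fderiv hU hG hp _ (G' := partialLam G) fun _ hq =>
    (hasSliceDerivAt hU hG hq).partialLam_eq).sliceDifferentiableAt

theorem partialsCommuteAt (hp : (ρ, z, l) ∈ U) : PartialsCommuteAt G ρ z l := by
  have hρ := hasSliceDerivAt_of_eqOn_fderiv hU hG hp _ (G' := partialRho G) fun _ hq =>
    (hasSliceDerivAt hU hG hq).partialRho_eq
  have hz := hasSliceDerivAt_of_eqOn_fderiv hU hG hp _ (G' := partialZ G) fun _ hq =>
    (hasSliceDerivAt hU hG hq).partialZ_eq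
  have hl := hasSliceDerivAt_of_eqOn_fderiv hU hG hp _ (G' := partialLam G) fun _ hq =>
    (hasSliceDerivAt hU hG hq).partialLam_eq
  exact ⟨by rw [hρ.partialZ_eq, hz.partialRho_eq, fderiv_fderiv_symm hU hG hp],
    by rw [hρ.partialLam_eq, hl.partialRho_eq, fderiv_fderiv_symm hU hG hp],
    by rw [hz.partialLam_eq, hl.partialZ_eq, fderiv_fderiv_symm hU hG hp]⟩

end IsC2HolOn

end ContDiffHolomorphic

local notation "V₁" =>
  vecField (fun _ _ _ => 1) (fun _ _ w => Complex.I * w) (fun r _ w => w / r)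
local notation "V₂" =>
  vecField (fun _ _ w => w) (fun _ _ _ => Complex.I) (fun r _ w => -(w ^ 2 / r))

section LaxCoefficients

variable {ρ z : ℝ} {l : ℂ}

theorem hasSliceDerivAt_lam : HasSliceDerivAt (fun _ _ w => w) 0 0 1 ρ z l :=
  ⟨hasDerivAt_const _ _, hasDerivAt_const _ _, hasDerivAt_id l⟩

theorem hasSliceDerivAt_mul_lam (c : ℂ) : HasSliceDerivAt (fun _ _ w => c * w) 0 0 c ρ z l :=
  ⟨hasDerivAt_const _ _, hasDerivAt_const _ _, by simpa using (hasDerivAt_id l).const_mul c⟩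

theorem hasSliceDerivAt_lam_div (hρ : ρ ≠ 0) :
    HasSliceDerivAt (fun r _ w => w / r) (-(l / ρ ^ 2)) 0 (1 / ρ) ρ z l := by
  refine ⟨?_, hasDerivAt_const _ _, by simpa using (hasDerivAt_id l).div_const (ρ : ℂ)⟩
  have := (hasDerivAt_const ρ l).fun_div (hasDerivAt_id ρ).ofReal_comp (by exact_mod_cast hρ)
  simpa [neg_div] using this

theorem hasSliceDerivAt_neg_lam_sq_div (hρ : ρ ≠ 0) :
    HasSliceDerivAt (fun r _ w => -(w ^ 2 / r)) (l ^ 2 / ρ ^ 2) 0 (-(2 * l / ρ)) ρ z l := by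
  refine ⟨?_, hasDerivAt_const _ _, ?_⟩
  · have := ((hasDerivAt_const ρ (l ^ 2)).fun_div (hasDerivAt_id ρ).ofReal_comp
      (by exact_mod_cast hρ)).fun_neg
    simpa [neg_div] using this
  · have := ((hasDerivAt_pow 2 l).div_const (ρ : ℂ)).fun_neg
    simpa [neg_div] using this

theorem vecField_lax_comm_sub {W : Type*} [NormedAddCommGroup W] [NormedSpace ℂ W]
    {G : ℝ → ℝ → ℂ → W} (hρ : ρ ≠ 0) (hGρ : SliceDifferentiableAt (partialRho G) ρ z l)
    (hGz : SliceDifferentiableAt (partialZ G) ρ z l)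
    (hGl : SliceDifferentiableAt (partialLam G) ρ z l) (hG : PartialsCommuteAt G ρ z l) :
    V₁ (V₂ G) ρ z l - V₂ (V₁ G) ρ z l = (l / ρ) • V₁ G ρ z l := by
  have ha₁ := hasSliceDerivAt_const (1 : ℂ) (ρ := ρ) (z := z) (l := l)
  have hb₁ := hasSliceDerivAt_mul_lam Complex.I (ρ := ρ) (z := z) (l := l)
  have hc₁ := hasSliceDerivAt_lam_div (z := z) (l := l) hρ
  have ha₂ := hasSliceDerivAt_lam (ρ := ρ) (z := z) (l := l)
  have hb₂ := hasSliceDerivAt_const Complex.I (ρ := ρ) (z := z) (l := l)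
  have hc₂ := hasSliceDerivAt_neg_lam_sq_div (z := z) (l := l) hρ
  rw [vecField_comm_sub ha₁.sliceDifferentiableAt hb₁.sliceDifferentiableAt
    hc₁.sliceDifferentiableAt ha₂.sliceDifferentiableAt hb₂.sliceDifferentiableAt
    hc₂.sliceDifferentiableAt hGρ hGz hGl hG, ha₁.vecField_eq, hb₁.vecField_eq, hc₁.vecField_eq,
    ha₂.vecField_eq, hb₂.vecField_eq, hc₂.vecField_eq, vecField]
  have hρ' : (ρ : ℂ) ≠ 0 := by exact_mod_cast hρ
  simp only [smul_eq_mul]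
  match_scalars <;> field_simp <;> ring

theorem sliceDifferentiableAt_V₁ {W : Type*} [NormedAddCommGroup W] [NormedSpace ℂ W]
    {G : ℝ → ℝ → ℂ → W} (hρ : ρ ≠ 0) (hGρ : SliceDifferentiableAt (partialRho G) ρ z l)
    (hGz : SliceDifferentiableAt (partialZ G) ρ z l)
    (hGl : SliceDifferentiableAt (partialLam G) ρ z l) :
    SliceDifferentiableAt (V₁ G) ρ z l :=
  .vecField (hasSliceDerivAt_const 1).sliceDifferentiableAt
    (hasSliceDerivAt_mul_lam _).sliceDifferentiableAt
    (hasSliceDerivAt_lam_div hρ).sliceDifferentiableAt hGρ hGz hGl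

theorem sliceDifferentiableAt_V₂ {W : Type*} [NormedAddCommGroup W] [NormedSpace ℂ W]
    {G : ℝ → ℝ → ℂ → W} (hρ : ρ ≠ 0) (hGρ : SliceDifferentiableAt (partialRho G) ρ z l)
    (hGz : SliceDifferentiableAt (partialZ G) ρ z l)
    (hGl : SliceDifferentiableAt (partialLam G) ρ z l) :
    SliceDifferentiableAt (V₂ G) ρ z l :=
  .vecField hasSliceDerivAt_lam.sliceDifferentiableAt
    (hasSliceDerivAt_const _).sliceDifferentiableAt
    (hasSliceDerivAt_neg_lam_sq_div hρ).sliceDifferentiableAt hGρ hGz hGl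

end LaxCoefficients

section Connection

variable {m : Type*} [Fintype m] [DecidableEq m]

noncomputable def connRho (J : ℝ → ℝ → Matrix m m ℂ) (ρ z : ℝ) : Matrix m m ℂ :=
  (J ρ z)⁻¹ * deriv (fun r => J r z) ρ

noncomputable def connZ (J : ℝ → ℝ → Matrix m m ℂ) (ρ z : ℝ) : Matrix m m ℂ :=
  (J ρ z)⁻¹ * deriv (fun t => J ρ t) z

noncomputable def yangOp (J : ℝ → ℝ → Matrix m m ℂ) (ρ z : ℝ) : Matrix m m ℂ :=
  deriv (fun r : ℝ => (r : ℂ) • connRho J r z) ρ + deriv (fun t => (ρ : ℂ) • connZ J ρ t) z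

omit [Fintype m] [DecidableEq m] in
theorem partialLam_const_lam {W : Type*} [NormedAddCommGroup W] [NormedSpace ℂ W]
    (A : ℝ → ℝ → W) (ρ z : ℝ) (l : ℂ) : partialLam (fun r t _ => A r t) ρ z l = 0 :=
  deriv_const l _

variable {J : ℝ → ℝ → Matrix m m ℂ} {ρ z : ℝ} {l : ℂ}
  (hJ : SliceDifferentiableAt (fun r t _ => J r t) ρ z l) (hu : IsUnit (J ρ z))
include hJ hu

theorem sliceDifferentiableAt_connRho
    (hJρ : SliceDifferentiableAt (partialRho fun r t _ => J r t) ρ z l) :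
    SliceDifferentiableAt (fun r t _ => connRho J r t) ρ z l :=
  (hJ.matrix_inv hu).matrix_mul hJρ

theorem sliceDifferentiableAt_connZ
    (hJz : SliceDifferentiableAt (partialZ fun r t _ => J r t) ρ z l) :
    SliceDifferentiableAt (fun r t _ => connZ J r t) ρ z l :=
  (hJ.matrix_inv hu).matrix_mul hJz

/-- Zero curvature of the flat connection `J⁻¹dJ`. -/
theorem partialZ_connRho_sub_partialRho_connZ
    (hJρ : SliceDifferentiableAt (partialRho fun r t _ => J r t) ρ z l)
    (hJz : SliceDifferentiableAt (partialZ fun r t _ => J r t) ρ z l)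
    (hcomm : PartialsCommuteAt (fun r t _ => J r t) ρ z l) :
    partialZ (fun r t _ => connRho J r t) ρ z l - partialRho (fun r t _ => connZ J r t) ρ z l
      = connRho J ρ z * connZ J ρ z - connZ J ρ z * connRho J ρ z := by
  have hz : HasDerivAt (fun t => connRho J ρ t)
      (-((J ρ z)⁻¹ * deriv (fun t => J ρ t) z * (J ρ z)⁻¹) * deriv (fun r => J r z) ρ
        + (J ρ z)⁻¹ * deriv (fun t => deriv (fun r => J r t) ρ) z) z :=
    (hJ.differentiableAt_z.hasDerivAt.matrix_inv hu).matrix_mul hJρ.differentiableAt_z.hasDerivAt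
  have hρ : HasDerivAt (fun r => connZ J r z)
      (-((J ρ z)⁻¹ * deriv (fun r => J r z) ρ * (J ρ z)⁻¹) * deriv (fun t => J ρ t) z
        + (J ρ z)⁻¹ * deriv (fun r => deriv (fun t => J r t) z) ρ) ρ :=
    (hJ.differentiableAt_rho.hasDerivAt.matrix_inv hu).matrix_mul
      hJz.differentiableAt_rho.hasDerivAt
  have hsymm : deriv (fun t => deriv (fun r => J r t) ρ) z
      = deriv (fun r => deriv (fun t => J r t) z) ρ := hcomm.rho_z
  simp only [partialZ, partialRho]
  rw [hz.deriv, hρ.deriv, hsymm, connRho, connZ]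
  noncomm_ring

theorem yangOp_eq
    (hJρ : SliceDifferentiableAt (partialRho fun r t _ => J r t) ρ z l)
    (hJz : SliceDifferentiableAt (partialZ fun r t _ => J r t) ρ z l) :
    yangOp J ρ z = connRho J ρ z + (ρ : ℂ) • (partialRho (fun r t _ => connRho J r t) ρ z l
      + partialZ (fun r t _ => connZ J r t) ρ z l) := by
  have hρ : HasDerivAt (fun r : ℝ => (r : ℂ) • connRho J r z)
      ((ρ : ℂ) • partialRho (fun r t _ => connRho J r t) ρ z l + (1 : ℂ) • connRho J ρ z) ρ :=
    (hasDerivAt_id' ρ).ofReal_comp.fun_smul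
      (sliceDifferentiableAt_connRho hJ hu hJρ).differentiableAt_rho.hasDerivAt
  have hz : HasDerivAt (fun t => (ρ : ℂ) • connZ J ρ t)
      ((ρ : ℂ) • partialZ (fun r t _ => connZ J r t) ρ z l) z :=
    (sliceDifferentiableAt_connZ hJ hu hJz).differentiableAt_z.hasDerivAt.fun_const_smul (ρ : ℂ)
  calc yangOp J ρ z = _ := congrArg₂ (· + ·) hρ.deriv hz.deriv
    _ = _ := by module

theorem vecField_laxPotential_sub (hρ : ρ ≠ 0)
    (hJρ : SliceDifferentiableAt (partialRho fun r t _ => J r t) ρ z l)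
    (hJz : SliceDifferentiableAt (partialZ fun r t _ => J r t) ρ z l)
    (hcomm : PartialsCommuteAt (fun r t _ => J r t) ρ z l) :
    V₁ (fun r t w => w • connRho J r t) ρ z l
        - V₂ (fun r t w => (Complex.I * w) • connZ J r t) ρ z l
      + ((Complex.I * l) • connZ J ρ z * (l • connRho J ρ z)
        - l • connRho J ρ z * ((Complex.I * l) • connZ J ρ z))
      = (l / ρ) • ((Complex.I * l) • connZ J ρ z) + (l / ρ) • yangOp J ρ z := by
  have hB := sliceDifferentiableAt_connRho hJ hu hJρ
  have hA := sliceDifferentiableAt_connZ hJ hu hJz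
  have hw := hasSliceDerivAt_lam (ρ := ρ) (z := z) (l := l)
  have hIw := hasSliceDerivAt_mul_lam Complex.I (ρ := ρ) (z := z) (l := l)
  rw [vecField_smul hw.sliceDifferentiableAt hB, vecField_smul hIw.sliceDifferentiableAt hA,
    hw.vecField_eq, hIw.vecField_eq, yangOp_eq hJ hu hJρ hJz]
  simp only [vecField, partialLam_const_lam]
  rw [eq_add_of_sub_eq' (partialZ_connRho_sub_partialRho_connZ hJ hu hJρ hJz hcomm)]
  simp only [Matrix.smul_mul, Matrix.mul_smul, smul_smul]
  have hρ' : (ρ : ℂ) ≠ 0 := by exact_mod_cast hρ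
  match_scalars <;> ring_nf <;> simp [Complex.I_sq, hρ']

end Connection

def laxDomain (Ω : Set (ℝ × ℝ)) : Set (ℝ × ℝ × ℂ) := {p | (p.1, p.2.1) ∈ Ω ∧ p.2.2 ≠ 0}

theorem isOpen_laxDomain {Ω : Set (ℝ × ℝ)} (hΩ : IsOpen Ω) : IsOpen (laxDomain Ω) :=
  (hΩ.preimage (by fun_prop)).inter (isOpen_compl_singleton.preimage (by fun_prop))

theorem LaxTest.isC2HolOn {n : ℕ} {Ω : Set (ℝ × ℝ)} {F : ℝ → ℝ → ℂ → (Fin n → ℂ)}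
    (hF : LaxTest n Ω F) : IsC2HolOn F (laxDomain Ω) :=
  ⟨hF.1, fun _ hp => hF.2 _ _ hp.1 _ hp.2⟩

theorem isC2HolOn_laxDomain_of_contDiffOn {W : Type*} [NormedAddCommGroup W] [NormedSpace ℂ W]
    {Ω : Set (ℝ × ℝ)} {J : ℝ → ℝ → W} (hJ : ContDiffOn ℝ 2 (fun p : ℝ × ℝ => J p.1 p.2) Ω) :
    IsC2HolOn (fun r t _ => J r t) (laxDomain Ω) :=
  ⟨hJ.comp (by fun_prop : ContDiff ℝ 2 fun p : ℝ × ℝ × ℂ => (p.1, p.2.1)).contDiffOn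
    fun _ hp => hp.1, fun _ _ => differentiableAt_const _⟩

theorem laxL1_eq_laxOp (n : ℕ) (J : ℝ → ℝ → Matrix (Fin n) (Fin n) ℂ) :
    LaxL1 n J = laxOp (fun _ _ _ => 1) (fun _ _ w => Complex.I * w) (fun r _ w => w / r)
      (fun r t w => (Complex.I * w) • connZ J r t) := by
  funext G ρ z l
  simp only [LaxL1, laxOp, vecField, partialRho, partialZ, partialLam, connZ, one_smul,
    smul_mulVec]

theorem laxL2_eq_laxOp (n : ℕ) (J : ℝ → ℝ → Matrix (Fin n) (Fin n) ℂ) :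
    LaxL2 n J = laxOp (fun _ _ w => w) (fun _ _ _ => Complex.I) (fun r _ w => -(w ^ 2 / r))
      (fun r t w => w • connRho J r t) := by
  funext G ρ z l
  simp only [LaxL2, laxOp, vecField, partialRho, partialZ, partialLam, connRho, smul_mulVec,
    neg_smul, sub_eq_add_neg]
  abel

theorem laxL1_laxL2_sub {n : ℕ} {Ω : Set (ℝ × ℝ)} (hΩ : IsOpen Ω)
    {J : ℝ → ℝ → Matrix (Fin n) (Fin n) ℂ} (hJ : ContDiffOn ℝ 2 (fun p : ℝ × ℝ => J p.1 p.2) Ω)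
    {F : ℝ → ℝ → ℂ → (Fin n → ℂ)} (hF : LaxTest n Ω F) {ρ z : ℝ} {l : ℂ} (hp : (ρ, z) ∈ Ω)
    (hl : l ≠ 0) (hρ : ρ ≠ 0) (hu : IsUnit (J ρ z)) :
    LaxL1 n J (LaxL2 n J F) ρ z l - LaxL2 n J (LaxL1 n J F) ρ z l
      = (l / ρ) • LaxL1 n J F ρ z l + (l / ρ) • (yangOp J ρ z *ᵥ F ρ z l) := by
  have hU := isOpen_laxDomain hΩ
  have hq : (ρ, z, l) ∈ laxDomain Ω := ⟨hp, hl⟩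
  have hF' := hF.isC2HolOn
  have hJ' := isC2HolOn_laxDomain_of_contDiffOn hJ
  have hFρ := hF'.sliceDifferentiableAt_partialRho hU hq
  have hFz := hF'.sliceDifferentiableAt_partialZ hU hq
  have hFl := hF'.sliceDifferentiableAt_partialLam hU hq
  have hJ0 := hJ'.sliceDifferentiableAt hU hq
  have hJρ := hJ'.sliceDifferentiableAt_partialRho hU hq
  have hJz := hJ'.sliceDifferentiableAt_partialZ hU hq
  rw [laxL1_eq_laxOp, laxL2_eq_laxOp,
    laxOp_comm_sub ((hasSliceDerivAt_mul_lam _).sliceDifferentiableAt.smul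
        (sliceDifferentiableAt_connZ hJ0 hu hJz))
      (hasSliceDerivAt_lam.sliceDifferentiableAt.smul (sliceDifferentiableAt_connRho hJ0 hu hJρ))
      (hF'.sliceDifferentiableAt hU hq) (sliceDifferentiableAt_V₁ hρ hFρ hFz hFl)
      (sliceDifferentiableAt_V₂ hρ hFρ hFz hFl),
    vecField_lax_comm_sub hρ hFρ hFz hFl (hF'.partialsCommuteAt hU hq),
    vecField_laxPotential_sub hJ0 hu hρ hJρ hJz (hJ'.partialsCommuteAt hU hq), laxOp]
  simp only [add_mulVec, smul_mulVec]
  module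

/-- Lax pair compatibility `L₁L₂ − L₂L₁ = (λ/ρ)L₁` on all test functions is
equivalent to Yang's equation `∂_ρ(ρ J⁻¹∂_ρJ) + ∂_z(ρ J⁻¹∂_zJ) = 0`. -/
theorem lax_compatibility_iff_yang (n : ℕ) (Ω : Set (ℝ × ℝ)) (hΩ : IsOpen Ω)
    (hΩpos : ∀ p ∈ Ω, 0 < p.1)
    (J : ℝ → ℝ → Matrix (Fin n) (Fin n) ℂ)
    (hJ : ContDiffOn ℝ 2 (fun p : ℝ × ℝ => J p.1 p.2) Ω)
    (hinv : ∀ p ∈ Ω, IsUnit (J p.1 p.2)) :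
    (∀ F : ℝ → ℝ → ℂ → (Fin n → ℂ), LaxTest n Ω F →
      ∀ ρ z : ℝ, (ρ, z) ∈ Ω → ∀ l : ℂ, l ≠ 0 →
        LaxL1 n J (LaxL2 n J F) ρ z l - LaxL2 n J (LaxL1 n J F) ρ z l
          = (l / (ρ : ℂ)) • LaxL1 n J F ρ z l) ↔
    (∀ p ∈ Ω,
      deriv (fun r : ℝ => (r : ℂ) • ((J r p.2)⁻¹ * deriv (fun t : ℝ => J t p.2) r)) p.1
        + deriv (fun z' : ℝ => (p.1 : ℂ) • ((J p.1 z')⁻¹ * deriv (fun t : ℝ => J p.1 t) z')) p.2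
        = 0) := by
  have key {F} (hF : LaxTest n Ω F) {ρ z} (hp : (ρ, z) ∈ Ω) {l : ℂ} (hl : l ≠ 0) :=
    laxL1_laxL2_sub hΩ hJ hF hp hl (hΩpos _ hp).ne' (hinv _ hp)
  refine ⟨fun hcomp p hp => ?_, fun hyang F hF ρ z hp l hl => ?_⟩
  · change yangOp J p.1 p.2 = 0
    refine ext_iff_mulVec.2 fun v => ?_
    have hv : LaxTest n Ω fun _ _ _ => v :=
      ⟨contDiffOn_const, fun _ _ _ _ _ => differentiableAt_const v⟩
    have h := key hv hp one_ne_zero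
    rw [hcomp _ hv _ _ hp 1 one_ne_zero, left_eq_add, smul_eq_zero] at h
    rw [zero_mulVec]
    exact h.resolve_left (by simpa using (hΩpos _ hp).ne')
  · rw [key hF hp hl, show yangOp J ρ z = 0 from hyang (ρ, z) hp, zero_mulVec, smul_zero, add_zero]
end

section
/- Conservation of the Painlevé III invariants: let I ⊆ (0,∞) be an open interval, let C be a constant 2×2 complex matrix, and let B, D : I → Mat₂(ℂ) be differentiable maps satisfying ∂_ρ B = D B − B D and ∂_ρ(ρ D) = ρ (B C − C B) on I. Then the three functions ρ ↦ tr(B(ρ)²), ρ ↦ ρ·tr(C D(ρ)), and ρ ↦ ρ·tr(B(ρ) D(ρ)) are constant on I. -/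
attribute [local instance] Matrix.normedAddCommGroup Matrix.normedSpace

open Matrix

/-! By the product rule and the two equations, the derivative of each quantity is a sum of
multiples of traces `tr(X [Y, X])`, and these vanish by cyclicity of the trace. -/

theorem IsOpen.is_const_of_hasDerivAt_zero {𝕜 G : Type*} [RCLike 𝕜] [NormedAddCommGroup G]
    [NormedSpace 𝕜 G] {f : 𝕜 → G} {s : Set 𝕜} (hs : IsOpen s) (hs' : IsPreconnected s)
    (hf : ∀ x ∈ s, HasDerivAt f 0 x) {x y : 𝕜} (hx : x ∈ s) (hy : y ∈ s) : f x = f y :=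
  hs.is_const_of_deriv_eq_zero hs' (fun z hz => (hf z hz).differentiableAt.differentiableWithinAt)
    (fun z hz => (hf z hz).deriv) hx hy

namespace Matrix

theorem trace_mul_commutator_self {n R : Type*} [Fintype n] [CommRing R] (X Y : Matrix n n R) :
    trace (X * (Y * X - X * Y)) = 0 := by
  rw [mul_sub, trace_sub, trace_mul_comm X (X * Y), Matrix.mul_assoc, sub_self]

theorem trace_mul_commutator_self' {n R : Type*} [Fintype n] [CommRing R] (X Y : Matrix n n R) :
    trace (X * (X * Y - Y * X)) = 0 := by
  rw [← neg_sub, Matrix.mul_neg, trace_neg, trace_mul_commutator_self, neg_zero]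

end Matrix

theorem HasDerivAt.trace_mul {𝕜 𝔸 n : Type*} [NontriviallyNormedField 𝕜] [NormedCommRing 𝔸]
    [NormedAlgebra 𝕜 𝔸] [Fintype n] {A B : 𝕜 → Matrix n n 𝔸} {A' B' : Matrix n n 𝔸} {x : 𝕜}
    (hA : HasDerivAt A A' x) (hB : HasDerivAt B B' x) :
    HasDerivAt (fun r => trace (A r * B r)) (trace (A' * B x + A x * B')) x := by
  have hA_entry (i j : n) : HasDerivAt (fun r => A r i j) (A' i j) x :=
    hasDerivAt_pi.mp (hasDerivAt_pi.mp hA i) j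
  have hB_entry (i j : n) : HasDerivAt (fun r => B r i j) (B' i j) x :=
    hasDerivAt_pi.mp (hasDerivAt_pi.mp hB i) j
  simp only [trace, diag, mul_apply]
  refine (HasDerivAt.fun_sum fun i _ => HasDerivAt.fun_sum fun j _ =>
    (hA_entry i j).mul (hB_entry j i)).congr_deriv ?_
  simp only [Matrix.add_apply, mul_apply, Finset.sum_add_distrib]

section PainleveIII

variable {n : Type*} [Fintype n] {B D : ℝ → Matrix n n ℂ} {C : Matrix n n ℂ} {ρ : ℝ}

theorem hasDerivAt_trace_sq_eq_zero (hB : HasDerivAt B (D ρ * B ρ - B ρ * D ρ) ρ) :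
    HasDerivAt (fun r => trace (B r * B r)) 0 ρ := by
  refine (hB.trace_mul hB).congr_deriv ?_
  rw [trace_add, trace_mul_comm, trace_mul_commutator_self, add_zero]

theorem hasDerivAt_mul_trace_const_mul_eq_zero
    (hD : HasDerivAt (fun r : ℝ => (r : ℂ) • D r) ((ρ : ℂ) • (B ρ * C - C * B ρ)) ρ) :
    HasDerivAt (fun r : ℝ => (r : ℂ) * trace (C * D r)) 0 ρ := by
  have h_smul : (fun r : ℝ => (r : ℂ) * trace (C * D r)) =
      fun r : ℝ => trace (C * ((r : ℂ) • D r)) := by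
    simp only [Matrix.mul_smul, trace_smul, smul_eq_mul]
  rw [h_smul]
  refine ((hasDerivAt_const ρ C).trace_mul hD).congr_deriv ?_
  rw [Matrix.zero_mul, zero_add, Matrix.mul_smul, trace_smul, trace_mul_commutator_self,
    smul_zero]

theorem hasDerivAt_mul_trace_mul_eq_zero (hB : HasDerivAt B (D ρ * B ρ - B ρ * D ρ) ρ)
    (hD : HasDerivAt (fun r : ℝ => (r : ℂ) • D r) ((ρ : ℂ) • (B ρ * C - C * B ρ)) ρ) :
    HasDerivAt (fun r : ℝ => (r : ℂ) * trace (B r * D r)) 0 ρ := by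
  have h_smul : (fun r : ℝ => (r : ℂ) * trace (B r * D r)) =
      fun r : ℝ => trace (B r * ((r : ℂ) • D r)) := by
    simp only [Matrix.mul_smul, trace_smul, smul_eq_mul]
  rw [h_smul]
  refine (hB.trace_mul hD).congr_deriv ?_
  rw [trace_add, trace_mul_comm, Matrix.smul_mul, Matrix.mul_smul, trace_smul, trace_smul,
    trace_mul_commutator_self', trace_mul_commutator_self', smul_zero, add_zero]

end PainleveIII

theorem painleveIII_invariants_constant_general (a b : ℝ)
    (C : Matrix (Fin 2) (Fin 2) ℂ) (B D : ℝ → Matrix (Fin 2) (Fin 2) ℂ)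
    (hB : ∀ ρ ∈ Set.Ioo a b, HasDerivAt B (D ρ * B ρ - B ρ * D ρ) ρ)
    (hD : ∀ ρ ∈ Set.Ioo a b,
      HasDerivAt (fun r : ℝ => (r : ℂ) • D r) ((ρ : ℂ) • (B ρ * C - C * B ρ)) ρ) :
    ∀ ρ₁ ∈ Set.Ioo a b, ∀ ρ₂ ∈ Set.Ioo a b,
      Matrix.trace (B ρ₁ * B ρ₁) = Matrix.trace (B ρ₂ * B ρ₂) ∧
      (ρ₁ : ℂ) * Matrix.trace (C * D ρ₁) = (ρ₂ : ℂ) * Matrix.trace (C * D ρ₂) ∧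
      (ρ₁ : ℂ) * Matrix.trace (B ρ₁ * D ρ₁) = (ρ₂ : ℂ) * Matrix.trace (B ρ₂ * D ρ₂) := by
  intro ρ₁ h₁ ρ₂ h₂
  have const_on_Ioo {f : ℝ → ℂ} (hf : ∀ ρ ∈ Set.Ioo a b, HasDerivAt f 0 ρ) : f ρ₁ = f ρ₂ :=
    isOpen_Ioo.is_const_of_hasDerivAt_zero isPreconnected_Ioo hf h₁ h₂
  exact ⟨const_on_Ioo fun ρ hρ => hasDerivAt_trace_sq_eq_zero (hB ρ hρ),
    const_on_Ioo fun ρ hρ => hasDerivAt_mul_trace_const_mul_eq_zero (hD ρ hρ),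
    const_on_Ioo fun ρ hρ => hasDerivAt_mul_trace_mul_eq_zero (hB ρ hρ) (hD ρ hρ)⟩

/-- Conservation of the Painlevé III invariants: if `B, D : I → Mat₂(ℂ)` are
differentiable on an open interval `I ⊆ (0,∞)` and satisfy
`∂_ρ B = DB − BD` and `∂_ρ(ρD) = ρ(BC − CB)` for a constant matrix `C`, then
`tr(B²)`, `ρ·tr(CD)` and `ρ·tr(BD)` are constant on `I`. -/
theorem painleveIII_invariants_constant (a b : ℝ) (ha : 0 ≤ a)
    (C : Matrix (Fin 2) (Fin 2) ℂ) (B D : ℝ → Matrix (Fin 2) (Fin 2) ℂ)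
    (hB : ∀ ρ ∈ Set.Ioo a b, HasDerivAt B (D ρ * B ρ - B ρ * D ρ) ρ)
    (hD : ∀ ρ ∈ Set.Ioo a b,
      HasDerivAt (fun r : ℝ => (r : ℂ) • D r) ((ρ : ℂ) • (B ρ * C - C * B ρ)) ρ) :
    ∀ ρ₁ ∈ Set.Ioo a b, ∀ ρ₂ ∈ Set.Ioo a b,
      Matrix.trace (B ρ₁ * B ρ₁) = Matrix.trace (B ρ₂ * B ρ₂) ∧
      (ρ₁ : ℂ) * Matrix.trace (C * D ρ₁) = (ρ₂ : ℂ) * Matrix.trace (C * D ρ₂) ∧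
      (ρ₁ : ℂ) * Matrix.trace (B ρ₁ * D ρ₁) = (ρ₂ : ℂ) * Matrix.trace (B ρ₂ * D ρ₂) :=
  painleveIII_invariants_constant_general a b C B D hB hD
end

section
/- Laurent coefficients of solutions of the charged Lax equations satisfy the Ward recursion: let Ω ⊆ {(ρ,z) ∈ ℝ² : ρ > 0} be open, A_ρ, A_z : Ω → ℂ continuously differentiable, and Δ_k : Ω → ℂ (k ∈ ℤ) continuously differentiable. Fix 0 < r₀ < 1 < R₀ and suppose that for each (ρ,z) ∈ Ω the series F(ρ,z,λ) = Σ_{j∈ℤ} Δ_{−j}(ρ,z) λ^{j} converges locally uniformly (together with its term-by-term (ρ,z)-derivatives) on the annulus r₀ < |λ| < R₀, and that F satisfies ∂_ρF + iλ∂_zF + (λ/ρ)∂_λF + iλ A_z F = 0 and i∂_zF + λ∂_ρF − (λ²/ρ)∂_λF − iλ A_ρ F = 0 there. Then for every k ∈ ℤ: ∂_ρ Δ_k − (k/ρ)Δ_k = −i(∂_z + A_z)Δ_{k+1} and ∂_ρ Δ_{k+1} − i A_ρ Δ_{k+1} + ((k+1)/ρ)Δ_{k+1} = −i ∂_z Δ_k.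 -/
/-!
On the unit circle each of `F`, `∂_ρ F`, `∂_z F` and `λ ∂_λ F` is a uniform limit of Laurent
partial sums, with coefficients `Δ_{-j}`, `∂_ρ Δ_{-j}`, `∂_z Δ_{-j}` and `j Δ_{-j}`. Such
coefficients are recovered by circle integrals against `λ^{-k-1}`, because `∮ λ^n` vanishes
unless `n = -1`; multiplying by `λ` shifts the coefficients by one. The two Lax equations are
linear in these four functions with coefficients of degree at most one in `λ` (after writing
`λ² ∂_λ F = λ · λ ∂_λ F`), so comparing the coefficients of `λ^{-k}` gives the recursion.
-/

open Filter Metric Complex Real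

theorem TendstoUniformlyOn.mul_left_of_norm_le {ι α 𝕜 : Type*} [NormedRing 𝕜] {p : Filter ι}
    {F : ι → α → 𝕜} {g φ : α → 𝕜} {s : Set α} {C : ℝ} (h : TendstoUniformlyOn F g p s)
    (hφ : ∀ x ∈ s, ‖φ x‖ ≤ C) :
    TendstoUniformlyOn (fun n x => φ x * F n x) (fun x => φ x * g x) p s := by
  rw [Metric.tendstoUniformlyOn_iff] at h ⊢
  intro ε hε
  have hC : 0 < |C| + 1 := by positivity
  filter_upwards [h (ε / (|C| + 1)) (div_pos hε hC)] with n hn x hx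
  calc dist (φ x * g x) (φ x * F n x) = ‖φ x * (g x - F n x)‖ := by
        rw [dist_eq_norm, mul_sub]
    _ ≤ ‖φ x‖ * dist (g x) (F n x) := by rw [dist_eq_norm]; exact norm_mul_le _ _
    _ ≤ (|C| + 1) * dist (g x) (F n x) := by
        gcongr
        exact (hφ x hx).trans ((le_abs_self C).trans (le_add_of_nonneg_right zero_le_one))
    _ < (|C| + 1) * (ε / (|C| + 1)) := by gcongr; exact hn x hx
    _ = ε := mul_div_cancel₀ ε hC.ne'

theorem circleIntegral_sub_center_zpow (c : ℂ) {R : ℝ} (hR : R ≠ 0) (n : ℤ) :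
    (∮ z in C(c, R), (z - c) ^ n) = if n = -1 then 2 * π * I else 0 := by
  split_ifs with hn
  · subst hn
    simpa using circleIntegral.integral_sub_center_inv c hR
  · exact circleIntegral.integral_sub_zpow_of_ne hn c c R

theorem continuousOn_zpow_unitSphere (n : ℤ) : ContinuousOn (fun z : ℂ => z ^ n) (sphere 0 1) :=
  (continuousOn_zpow₀ n).mono fun z hz => ne_zero_of_mem_unit_sphere (⟨z, hz⟩ : sphere (0 : ℂ) 1)

theorem continuousOn_laurentPartialSum_unitSphere (c : ℤ → ℂ) (s : Finset ℤ) :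
    ContinuousOn (fun z : ℂ => ∑ j ∈ s, c j * z ^ j) (sphere 0 1) :=
  continuousOn_finsetSum s fun j _ => continuousOn_const.mul (continuousOn_zpow_unitSphere j)

theorem hasDerivAt_laurentPartialSum (c : ℤ → ℂ) (s : Finset ℤ) {z : ℂ} (hz : z ≠ 0) :
    HasDerivAt (fun z : ℂ => ∑ j ∈ s, c j * z ^ j) (∑ j ∈ s, c j * (j * z ^ (j - 1))) z :=
  HasDerivAt.fun_sum fun j _ => (hasDerivAt_zpow j z (Or.inl hz)).const_mul (c j)

def HasLaurentSeriesOnCircle (c : ℤ → ℂ) (g : ℂ → ℂ) : Prop :=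
  TendstoUniformlyOn (fun (s : Finset ℤ) (z : ℂ) => ∑ j ∈ s, c j * z ^ j) g atTop (sphere 0 1)

namespace HasLaurentSeriesOnCircle

variable {c d : ℤ → ℂ} {g h : ℂ → ℂ}

theorem of_tendstoLocallyUniformlyOn {U : Set ℂ} (hU : sphere 0 1 ⊆ U)
    (hg : TendstoLocallyUniformlyOn (fun (s : Finset ℤ) (z : ℂ) => ∑ j ∈ s, c j * z ^ j) g
      atTop U) :
    HasLaurentSeriesOnCircle c g :=
  (tendstoLocallyUniformlyOn_iff_tendstoUniformlyOn_of_compact (isCompact_sphere 0 1)).1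
    (hg.mono hU)

theorem add (hg : HasLaurentSeriesOnCircle c g) (hh : HasLaurentSeriesOnCircle d h) :
    HasLaurentSeriesOnCircle (fun j => c j + d j) (fun z => g z + h z) :=
  (hg.fun_add hh).congr <| .of_forall fun s z _ => by
    simp only [add_mul, Finset.sum_add_distrib]

theorem const_mul (hg : HasLaurentSeriesOnCircle c g) (a : ℂ) :
    HasLaurentSeriesOnCircle (fun j => a * c j) (fun z => a * g z) :=
  (hg.mul_left_of_norm_le (φ := fun _ => a) fun _ _ => le_rfl).congr <| .of_forall fun s z _ => by
    simp only [Finset.mul_sum, mul_assoc]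

theorem id_mul (hg : HasLaurentSeriesOnCircle c g) :
    HasLaurentSeriesOnCircle (fun j => c (j - 1)) (fun z => z * g z) := by
  have hmul := hg.mul_left_of_norm_le (φ := id) fun z hz => (mem_sphere_zero_iff_norm.1 hz).le
  have hinj : Function.Injective (· + (1 : ℤ)) := add_left_injective 1
  have hshift : TendstoUniformlyOn
      (fun (t : Finset ℤ) (z : ℂ) => z * ∑ i ∈ t.preimage (· + 1) hinj.injOn, c i * z ^ i)
      (fun z => z * g z) atTop (sphere 0 1) :=
    fun u hu => (tendsto_finset_preimage_atTop_atTop hinj).eventually (hmul u hu)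
  refine hshift.congr (.of_forall fun t z hz => ?_)
  have hz0 : z ≠ 0 := ne_zero_of_mem_unit_sphere ⟨z, hz⟩
  simp only [Finset.mul_sum]
  rw [← Finset.sum_preimage (· + 1) t hinj.injOn (fun j => c (j - 1) * z ^ j)
    fun j _ hj => (hj ⟨j - 1, sub_add_cancel j 1⟩).elim]
  refine Finset.sum_congr rfl fun i _ => ?_
  rw [add_sub_cancel_right, zpow_add_one₀ hz0]
  ring

theorem circleIntegral_eq (hg : HasLaurentSeriesOnCircle c g) (k : ℤ) :
    (∮ z in C(0, 1), z ^ (-k - 1) * g z) = 2 * π * I * c k := by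
  have hpow : ∀ z ∈ sphere (0 : ℂ) 1, ‖z ^ (-k - 1)‖ ≤ 1 := fun z hz => by
    rw [norm_zpow, mem_sphere_zero_iff_norm.1 hz, one_zpow]
  have hlim := (hg.mul_left_of_norm_le hpow).tendsto_circleIntegral_of_continuousOn zero_le_one
    (.of_forall fun s => (continuousOn_zpow_unitSphere _).mul
      (continuousOn_laurentPartialSum_unitSphere c s))
  refine tendsto_nhds_unique hlim (tendsto_const_nhds.congr' ?_)
  filter_upwards [eventually_ge_atTop {k}] with s hs
  have hterm : ∀ j ∈ s, CircleIntegrable (fun z => c j * z ^ (j - k - 1)) 0 1 := fun j _ =>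
    (continuousOn_const.mul (continuousOn_zpow_unitSphere _)).circleIntegrable zero_le_one
  rw [circleIntegral.integral_congr zero_le_one (g := fun z => ∑ j ∈ s, c j * z ^ (j - k - 1))
    fun z hz => ?_, circleIntegral.integral_fun_sum hterm]
  · simp only [circleIntegral.integral_const_mul]
    have horth : ∀ j : ℤ, (∮ z in C(0, 1), z ^ (j - k - 1)) = if j = k then 2 * π * I else 0 :=
      fun j => by
        simpa only [sub_zero, show j - k - 1 = -1 ↔ j = k by omega] using
          circleIntegral_sub_center_zpow 0 one_ne_zero (j - k - 1)
    simp only [horth, mul_ite, mul_zero, Finset.sum_ite_eq', Finset.singleton_subset_iff.1 hs,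
      if_true, mul_comm]
  · have hz0 : z ≠ 0 := ne_zero_of_mem_unit_sphere (⟨z, hz⟩ : sphere (0 : ℂ) 1)
    change z ^ (-k - 1) * ∑ j ∈ s, c j * z ^ j = _
    rw [Finset.mul_sum]
    refine Finset.sum_congr rfl fun j _ => ?_
    rw [mul_left_comm, ← zpow_add₀ hz0]
    ring_nf

theorem coeff_eq_zero (hg : HasLaurentSeriesOnCircle c g) (hg0 : ∀ z ∈ sphere (0 : ℂ) 1, g z = 0)
    (k : ℤ) : c k = 0 := by
  have h := hg.circleIntegral_eq k
  rw [circleIntegral.integral_congr zero_le_one (g := fun _ => 0)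
    fun z hz => by simp only [hg0 z hz, mul_zero]] at h
  simp only [circleIntegral, smul_zero, intervalIntegral.integral_zero] at h
  simpa [pi_ne_zero, I_ne_zero] using h.symm

theorem id_mul_deriv_of_tendstoLocallyUniformlyOn {U : Set ℂ} (hU : IsOpen U)
    (hsU : sphere 0 1 ⊆ U)
    (hg : TendstoLocallyUniformlyOn (fun (s : Finset ℤ) (z : ℂ) => ∑ j ∈ s, c j * z ^ j) g
      atTop U) :
    HasLaurentSeriesOnCircle (fun j => j * c j) (fun z => z * deriv g z) := by
  have hsV : sphere 0 1 ⊆ U \ {0} := fun z hz =>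
    ⟨hsU hz, ne_zero_of_mem_unit_sphere (⟨z, hz⟩ : sphere (0 : ℂ) 1)⟩
  have hdiff : ∀ s : Finset ℤ, DifferentiableOn ℂ (fun z => ∑ j ∈ s, c j * z ^ j) (U \ {0}) :=
    fun s z hz => (hasDerivAt_laurentPartialSum c s hz.2).differentiableAt.differentiableWithinAt
  have hderiv := (tendstoLocallyUniformlyOn_iff_tendstoUniformlyOn_of_compact
    (isCompact_sphere 0 1)).1
      (((hg.mono Set.sdiff_subset).deriv (.of_forall hdiff) (hU.sdiff isClosed_singleton)).mono hsV)
  refine (hderiv.mul_left_of_norm_le (φ := id) fun z hz => (mem_sphere_zero_iff_norm.1 hz).le).congr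
    (.of_forall fun s z hz => ?_)
  have hz0 : z ≠ 0 := ne_zero_of_mem_unit_sphere (⟨z, hz⟩ : sphere (0 : ℂ) 1)
  change z * deriv (fun z => ∑ j ∈ s, c j * z ^ j) z = _
  rw [(hasDerivAt_laurentPartialSum c s hz0).deriv, Finset.mul_sum]
  refine Finset.sum_congr rfl fun j _ => ?_
  rw [zpow_sub_one₀ hz0]
  field_simp

end HasLaurentSeriesOnCircle

theorem laurent_coefficients_ward_recursion_general (Ω : Set (ℝ × ℝ))
    (Aρ Az : ℝ → ℝ → ℂ)
    (Δ : ℤ → ℝ → ℝ → ℂ)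
    (r₀ R₀ : ℝ) (hr₁ : r₀ < 1) (hR₀ : 1 < R₀)
    (F : ℝ → ℝ → ℂ → ℂ)
    (hconv : ∀ p ∈ Ω, TendstoLocallyUniformlyOn
      (fun (s : Finset ℤ) (l : ℂ) => ∑ j ∈ s, Δ (-j) p.1 p.2 * l ^ j)
      (fun l : ℂ => F p.1 p.2 l) atTop
      {l : ℂ | r₀ < ‖l‖ ∧ ‖l‖ < R₀})
    (hconvρ : ∀ p ∈ Ω, TendstoLocallyUniformlyOn
      (fun (s : Finset ℤ) (l : ℂ) => ∑ j ∈ s, deriv (fun r : ℝ => Δ (-j) r p.2) p.1 * l ^ j)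
      (fun l : ℂ => deriv (fun r : ℝ => F r p.2 l) p.1) atTop
      {l : ℂ | r₀ < ‖l‖ ∧ ‖l‖ < R₀})
    (hconvz : ∀ p ∈ Ω, TendstoLocallyUniformlyOn
      (fun (s : Finset ℤ) (l : ℂ) => ∑ j ∈ s, deriv (fun z' : ℝ => Δ (-j) p.1 z') p.2 * l ^ j)
      (fun l : ℂ => deriv (fun z' : ℝ => F p.1 z' l) p.2) atTop
      {l : ℂ | r₀ < ‖l‖ ∧ ‖l‖ < R₀})
    (hPDE1 : ∀ p ∈ Ω, ∀ l : ℂ, r₀ < ‖l‖ → ‖l‖ < R₀ →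
      deriv (fun r : ℝ => F r p.2 l) p.1
        + Complex.I * l * deriv (fun z' : ℝ => F p.1 z' l) p.2
        + (l / (p.1 : ℂ)) * deriv (fun w : ℂ => F p.1 p.2 w) l
        + Complex.I * l * Az p.1 p.2 * F p.1 p.2 l = 0)
    (hPDE2 : ∀ p ∈ Ω, ∀ l : ℂ, r₀ < ‖l‖ → ‖l‖ < R₀ →
      Complex.I * deriv (fun z' : ℝ => F p.1 z' l) p.2
        + l * deriv (fun r : ℝ => F r p.2 l) p.1
        - (l ^ 2 / (p.1 : ℂ)) * deriv (fun w : ℂ => F p.1 p.2 w) l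
        - Complex.I * l * Aρ p.1 p.2 * F p.1 p.2 l = 0) :
    ∀ k : ℤ, ∀ p ∈ Ω,
      (deriv (fun r : ℝ => Δ k r p.2) p.1 - ((k : ℂ) / (p.1 : ℂ)) * Δ k p.1 p.2
        = -Complex.I * (deriv (fun z' : ℝ => Δ (k + 1) p.1 z') p.2
            + Az p.1 p.2 * Δ (k + 1) p.1 p.2)) ∧
      (deriv (fun r : ℝ => Δ (k + 1) r p.2) p.1
          - Complex.I * Aρ p.1 p.2 * Δ (k + 1) p.1 p.2
          + (((k : ℂ) + 1) / (p.1 : ℂ)) * Δ (k + 1) p.1 p.2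
        = -Complex.I * deriv (fun z' : ℝ => Δ k p.1 z') p.2) := by
  intro k p hp
  have hsphere : sphere (0 : ℂ) 1 ⊆ {l : ℂ | r₀ < ‖l‖ ∧ ‖l‖ < R₀} := fun l hl => by
    have hl1 : ‖l‖ = 1 := mem_sphere_zero_iff_norm.1 hl
    exact ⟨hl1 ▸ hr₁, hl1 ▸ hR₀⟩
  have hann : IsOpen {l : ℂ | r₀ < ‖l‖ ∧ ‖l‖ < R₀} :=
    (isOpen_lt continuous_const continuous_norm).inter (isOpen_lt continuous_norm continuous_const)
  have hF := HasLaurentSeriesOnCircle.of_tendstoLocallyUniformlyOn hsphere (hconv p hp)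
  have hFρ := HasLaurentSeriesOnCircle.of_tendstoLocallyUniformlyOn hsphere (hconvρ p hp)
  have hFz := HasLaurentSeriesOnCircle.of_tendstoLocallyUniformlyOn hsphere (hconvz p hp)
  have hFw := HasLaurentSeriesOnCircle.id_mul_deriv_of_tendstoLocallyUniformlyOn hann hsphere
    (hconv p hp)
  have h₁ := (((hFρ.add (hFz.id_mul.const_mul I)).add (hFw.const_mul (p.1 : ℂ)⁻¹)).add
    (hF.id_mul.const_mul (I * Az p.1 p.2))).coeff_eq_zero (fun l hl => by
      have hl' := hsphere hl
      linear_combination hPDE1 p hp l hl'.1 hl'.2) (-k)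
  have h₂ := (((hFz.const_mul I).add hFρ.id_mul).add ((hFw.id_mul.const_mul (-(p.1 : ℂ)⁻¹)).add
    (hF.id_mul.const_mul (-(I * Aρ p.1 p.2))))).coeff_eq_zero (fun l hl => by
      have hl' := hsphere hl
      linear_combination hPDE2 p hp l hl'.1 hl'.2) (-k)
  have hk : -(-k - 1) = k + 1 := by ring
  simp only [neg_neg, hk] at h₁ h₂
  push_cast at h₁ h₂
  constructor
  · linear_combination h₁
  · linear_combination h₂

/-- Laurent coefficients of solutions of the charged Lax equations satisfy the
Ward recursion. -/
theorem laurent_coefficients_ward_recursion (Ω : Set (ℝ × ℝ)) (hΩ : IsOpen Ω)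
    (hΩpos : ∀ p ∈ Ω, 0 < p.1)
    (Aρ Az : ℝ → ℝ → ℂ)
    (hAρ : ContDiffOn ℝ 1 (fun p : ℝ × ℝ => Aρ p.1 p.2) Ω)
    (hAz : ContDiffOn ℝ 1 (fun p : ℝ × ℝ => Az p.1 p.2) Ω)
    (Δ : ℤ → ℝ → ℝ → ℂ)
    (hΔ : ∀ k : ℤ, ContDiffOn ℝ 1 (fun p : ℝ × ℝ => Δ k p.1 p.2) Ω)
    (r₀ R₀ : ℝ) (hr₀ : 0 < r₀) (hr₁ : r₀ < 1) (hR₀ : 1 < R₀)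
    (F : ℝ → ℝ → ℂ → ℂ)
    (hconv : ∀ p ∈ Ω, TendstoLocallyUniformlyOn
      (fun (s : Finset ℤ) (l : ℂ) => ∑ j ∈ s, Δ (-j) p.1 p.2 * l ^ j)
      (fun l : ℂ => F p.1 p.2 l) atTop
      {l : ℂ | r₀ < ‖l‖ ∧ ‖l‖ < R₀})
    (hconvρ : ∀ p ∈ Ω, TendstoLocallyUniformlyOn
      (fun (s : Finset ℤ) (l : ℂ) => ∑ j ∈ s, deriv (fun r : ℝ => Δ (-j) r p.2) p.1 * l ^ j)
      (fun l : ℂ => deriv (fun r : ℝ => F r p.2 l) p.1) atTop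
      {l : ℂ | r₀ < ‖l‖ ∧ ‖l‖ < R₀})
    (hconvz : ∀ p ∈ Ω, TendstoLocallyUniformlyOn
      (fun (s : Finset ℤ) (l : ℂ) => ∑ j ∈ s, deriv (fun z' : ℝ => Δ (-j) p.1 z') p.2 * l ^ j)
      (fun l : ℂ => deriv (fun z' : ℝ => F p.1 z' l) p.2) atTop
      {l : ℂ | r₀ < ‖l‖ ∧ ‖l‖ < R₀})
    (hPDE1 : ∀ p ∈ Ω, ∀ l : ℂ, r₀ < ‖l‖ → ‖l‖ < R₀ →
      deriv (fun r : ℝ => F r p.2 l) p.1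
        + Complex.I * l * deriv (fun z' : ℝ => F p.1 z' l) p.2
        + (l / (p.1 : ℂ)) * deriv (fun w : ℂ => F p.1 p.2 w) l
        + Complex.I * l * Az p.1 p.2 * F p.1 p.2 l = 0)
    (hPDE2 : ∀ p ∈ Ω, ∀ l : ℂ, r₀ < ‖l‖ → ‖l‖ < R₀ →
      Complex.I * deriv (fun z' : ℝ => F p.1 z' l) p.2
        + l * deriv (fun r : ℝ => F r p.2 l) p.1
        - (l ^ 2 / (p.1 : ℂ)) * deriv (fun w : ℂ => F p.1 p.2 w) l
        - Complex.I * l * Aρ p.1 p.2 * F p.1 p.2 l = 0) :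
    ∀ k : ℤ, ∀ p ∈ Ω,
      (deriv (fun r : ℝ => Δ k r p.2) p.1 - ((k : ℂ) / (p.1 : ℂ)) * Δ k p.1 p.2
        = -Complex.I * (deriv (fun z' : ℝ => Δ (k + 1) p.1 z') p.2
            + Az p.1 p.2 * Δ (k + 1) p.1 p.2)) ∧
      (deriv (fun r : ℝ => Δ (k + 1) r p.2) p.1
          - Complex.I * Aρ p.1 p.2 * Δ (k + 1) p.1 p.2
          + (((k : ℂ) + 1) / (p.1 : ℂ)) * Δ (k + 1) p.1 p.2
        = -Complex.I * deriv (fun z' : ℝ => Δ k p.1 z') p.2) :=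
  laurent_coefficients_ward_recursion_general Ω Aρ Az Δ r₀ R₀ hr₁ hR₀ F hconv hconvρ hconvz hPDE1
    hPDE2
end

section
/- Frobenius analysis of Painlevé III at the fixed singularity: let α, β, γ, δ ∈ ℂ with α ≠ 0 and γ ≠ 0, let ε > 0, and let f be holomorphic and nowhere zero on the punctured disc D' = {ρ ∈ ℂ : 0 < |ρ| < ε}. Suppose f is meromorphic at 0 (i.e., ρ^N f(ρ) extends holomorphically to 0 for some N ∈ ℕ) and that f satisfies the Painlevé III equation f'' = (f')²/f − f'/ρ + (α f² + β)/ρ + γ f³ + δ/f on D'. Then f has at most a simple pole at ρ = 0, and if f does have a pole at 0 then lim_{ρ→0} ρ f(ρ) = −α/γ. -/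
/-!
Near `0` write `f = ρ ^ c * u` with `u` holomorphic and `u 0 ≠ 0`: `f` is meromorphic and not
identically zero. Divided by `f / ρ`, Painlevé III reads
`(ρ f'/f)' = α f + β / f + γ ρ f² + δ ρ / f²`, and `ρ f'/f = c + ρ u'/u` differs from the
holomorphic function `G = ρ u'/u` by a constant. For a pole `c = -(k + 1)`, multiplying by
`ρ ^ (2k + 1)` gives `ρ^(2k+1) G' = α ρ^k u + β ρ^(3k+2) / u + γ u² + δ ρ^(4k+4) / u²`, and letting
`ρ → 0` yields `u 0 * (α 0^k + γ u 0) = 0`. As `γ u 0 ≠ 0`, this forces `k = 0` and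
`u 0 = -α / γ`.
-/

open Metric Filter Topology Set

theorem MeromorphicAt.of_eventually_eq_pow_mul {𝕜 : Type*} [NontriviallyNormedField 𝕜]
    {f g : 𝕜 → 𝕜} {x : 𝕜} {N : ℕ} (hg : AnalyticAt 𝕜 g x)
    (hgf : ∀ᶠ z in 𝓝[≠] x, g z = (z - x) ^ N * f z) : MeromorphicAt f x := by
  refine (show MeromorphicAt (fun z => ((z - x) ^ N)⁻¹ * g z) x by fun_prop).congr ?_
  filter_upwards [hgf, self_mem_nhdsWithin] with z hz hzx
  rw [hz, inv_mul_cancel_left₀ (pow_ne_zero _ (sub_ne_zero.2 hzx))]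

theorem exists_differentiableOn_eqOn_of_eventuallyEq_nhdsNE {𝕜 E : Type*}
    [NontriviallyNormedField 𝕜] [NormedAddCommGroup E] [NormedSpace 𝕜 E] {F v : 𝕜 → E}
    {U : Set 𝕜} {x : 𝕜} (hU : IsOpen U) (hF : DifferentiableOn 𝕜 F (U \ {x}))
    (hv : DifferentiableAt 𝕜 v x) (hFv : F =ᶠ[𝓝[≠] x] v) :
    ∃ g, DifferentiableOn 𝕜 g U ∧ EqOn g F (U \ {x}) := by
  classical
  refine ⟨Function.update F x (v x), fun y hy => ?_, fun y hy => Function.update_of_ne hy.2 _ _⟩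
  refine DifferentiableAt.differentiableWithinAt ?_
  rcases eq_or_ne y x with rfl | hyx
  · refine hv.congr_of_eventuallyEq (eventuallyEq_nhds_of_eventuallyEq_nhdsNE ?_ (by simp))
    filter_upwards [hFv, self_mem_nhdsWithin] with z hz hzy
    rw [Function.update_of_ne hzy, hz]
  · have hFy := hF.differentiableAt ((hU.sdiff isClosed_singleton).mem_nhds ⟨hy, hyx⟩)
    refine hFy.congr_of_eventuallyEq ?_
    filter_upwards [isOpen_ne.mem_nhds hyx] with z hz
    exact Function.update_of_ne hz _ _

section ZPowMul

variable {𝕜 : Type*} [NontriviallyNormedField 𝕜] [CompleteSpace 𝕜] {f u : 𝕜 → 𝕜} {c : ℤ}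

theorem mul_logDeriv_eventuallyEq_of_eventuallyEq_zpow_mul
    (hu : AnalyticAt 𝕜 u 0) (hu0 : u 0 ≠ 0) (hfu : ∀ᶠ z in 𝓝[≠] 0, f z = z ^ c * u z) :
    (fun z => z * logDeriv f z) =ᶠ[𝓝[≠] 0] fun z => c + z * logDeriv u z := by
  filter_upwards [logDeriv_congr_nhdsNE hfu,
    eventually_nhdsWithin_of_eventually_nhds hu.eventually_analyticAt,
    eventually_nhdsWithin_of_eventually_nhds (hu.continuousAt.eventually_ne hu0),
    self_mem_nhdsWithin] with z hlog huz hu0z (hz : z ≠ 0)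
  rw [hlog, logDeriv_mul (f := (· ^ c)) z (zpow_ne_zero _ hz) hu0z
    (differentiableAt_zpow.2 (.inl hz)) huz.differentiableAt, logDeriv_zpow]
  field_simp

theorem eventually_analyticAt_and_ne_zero_of_eventuallyEq_zpow_mul
    (hu : AnalyticAt 𝕜 u 0) (hu0 : u 0 ≠ 0) (hfu : ∀ᶠ z in 𝓝[≠] 0, f z = z ^ c * u z) :
    ∀ᶠ z in 𝓝[≠] 0, AnalyticAt 𝕜 f z ∧ f z ≠ 0 := by
  rw [← eventually_nhdsNE_eventually_nhds_iff] at hfu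
  filter_upwards [hfu, eventually_nhdsWithin_of_eventually_nhds hu.eventually_analyticAt,
    eventually_nhdsWithin_of_eventually_nhds (hu.continuousAt.eventually_ne hu0),
    self_mem_nhdsWithin] with z hfz huz hu0z (hz : z ≠ 0)
  refine ⟨((analyticAt_id.zpow hz).mul huz).congr (hfz.mono fun _ h => h.symm), ?_⟩
  rw [hfz.self_of_nhds]
  exact mul_ne_zero (zpow_ne_zero _ hz) hu0z

end ZPowMul

def PainleveIIIAt (α β γ δ : ℂ) (f : ℂ → ℂ) (ρ : ℂ) : Prop :=
  deriv (deriv f) ρ =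
    (deriv f ρ) ^ 2 / f ρ - deriv f ρ / ρ + (α * (f ρ) ^ 2 + β) / ρ + γ * (f ρ) ^ 3 + δ / f ρ

theorem PainleveIIIAt.deriv_mul_logDeriv {α β γ δ ρ : ℂ} {f : ℂ → ℂ}
    (h : PainleveIIIAt α β γ δ f ρ) (hf : AnalyticAt ℂ f ρ) (hρ : ρ ≠ 0) (hfρ : f ρ ≠ 0) :
    deriv (fun z => z * logDeriv f z) ρ =
      α * f ρ + β / f ρ + γ * ρ * f ρ ^ 2 + δ * ρ / f ρ ^ 2 := by
  have hL : HasDerivAt (logDeriv f)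
      ((deriv (deriv f) ρ * f ρ - deriv f ρ * deriv f ρ) / f ρ ^ 2) ρ :=
    hf.deriv.differentiableAt.hasDerivAt.div hf.differentiableAt.hasDerivAt hfρ
  rw [((hasDerivAt_id' ρ).fun_mul hL).deriv, h, logDeriv_apply]
  field_simp
  ring

theorem painleveIII_simple_pole {α β γ δ : ℂ} (hγ : γ ≠ 0) {f u : ℂ → ℂ} {c : ℤ}
    (hu : AnalyticAt ℂ u 0) (hu0 : u 0 ≠ 0) (hfu : ∀ᶠ z in 𝓝[≠] 0, f z = z ^ c * u z)
    (hP : ∀ᶠ z in 𝓝[≠] 0, PainleveIIIAt α β γ δ f z) (hc : c < 0) :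
    c = -1 ∧ u 0 = -α / γ := by
  obtain ⟨k, rfl⟩ : ∃ k : ℕ, c = -(k + 1) := ⟨(-c - 1).toNat, by omega⟩
  set G : ℂ → ℂ := fun z => z * logDeriv u z
  have hG' : ContinuousAt (deriv G) 0 :=
    (analyticAt_id.mul (hu.deriv.div hu hu0)).deriv.continuousAt
  have hderiv : ∀ᶠ z in 𝓝[≠] 0,
      deriv G z = α * f z + β / f z + γ * z * f z ^ 2 + δ * z / f z ^ 2 := by
    filter_upwards [(mul_logDeriv_eventuallyEq_of_eventuallyEq_zpow_mul hu hu0 hfu).nhdsNE_deriv,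
      eventually_analyticAt_and_ne_zero_of_eventuallyEq_zpow_mul hu hu0 hfu, hP,
      self_mem_nhdsWithin] with z hGz ⟨hfz, hf0z⟩ hPz (hz : z ≠ 0)
    rw [← hPz.deriv_mul_logDeriv hfz hz hf0z, hGz, deriv_const_add]
  have hrescaled : ∀ᶠ z in 𝓝[≠] 0, z ^ (2 * k + 1) * deriv G z =
      α * z ^ k * u z + β * z ^ (3 * k + 2) / u z + γ * u z ^ 2
        + δ * z ^ (4 * k + 4) / u z ^ 2 := by
    filter_upwards [hderiv, hfu, eventually_nhdsWithin_of_eventually_nhds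
      (hu.continuousAt.eventually_ne hu0), self_mem_nhdsWithin] with z hGz hfz hu0z (hz : z ≠ 0)
    rw [hGz, hfz, show (-((k : ℤ) + 1)) = -((k + 1 : ℕ) : ℤ) by push_cast; ring, zpow_neg,
      zpow_natCast]
    field_simp
    ring
  have hlim := ((ContinuousAt.eventuallyEq_nhds_iff_eventuallyEq_nhdsNE (by fun_prop)
    (by fun_prop (disch := simp [hu0]))).1 hrescaled).eq_of_nhds
  have hroot : u 0 * (α * 0 ^ k + γ * u 0) = 0 := by
    rw [zero_pow (n := 2 * k + 1) (by omega), zero_pow (n := 3 * k + 2) (by omega),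
      zero_pow (n := 4 * k + 4) (by omega)] at hlim
    linear_combination -hlim
  have hlin : α * 0 ^ k + γ * u 0 = 0 := (mul_eq_zero.1 hroot).resolve_left hu0
  cases k with
  | zero =>
    refine ⟨by norm_num, ?_⟩
    rw [eq_div_iff hγ]
    linear_combination hlin
  | succ k =>
    rw [zero_pow k.succ_ne_zero, mul_zero, zero_add] at hlin
    exact absurd hlin (mul_ne_zero hγ hu0)

theorem painleveIII_frobenius_general (α β γ δ : ℂ) (hγ : γ ≠ 0)
    (ε : ℝ) (hε : 0 < ε) (f : ℂ → ℂ)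
    (hf : DifferentiableOn ℂ f (ball (0 : ℂ) ε \ {0}))
    (hne : ∀ ρ ∈ ball (0 : ℂ) ε \ {0}, f ρ ≠ 0)
    (hmer : ∃ (N : ℕ) (g : ℂ → ℂ), DifferentiableOn ℂ g (ball (0 : ℂ) ε) ∧
      ∀ ρ ∈ ball (0 : ℂ) ε \ {0}, g ρ = ρ ^ N * f ρ)
    (hP3 : ∀ ρ ∈ ball (0 : ℂ) ε \ {0},
      deriv (deriv f) ρ =
        (deriv f ρ) ^ 2 / f ρ - deriv f ρ / ρ + (α * (f ρ) ^ 2 + β) / ρ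
          + γ * (f ρ) ^ 3 + δ / f ρ) :
    (∃ h : ℂ → ℂ, DifferentiableOn ℂ h (ball (0 : ℂ) ε) ∧
      ∀ ρ ∈ ball (0 : ℂ) ε \ {0}, h ρ = ρ * f ρ) ∧
    ((¬ ∃ g : ℂ → ℂ, DifferentiableOn ℂ g (ball (0 : ℂ) ε) ∧
        ∀ ρ ∈ ball (0 : ℂ) ε \ {0}, g ρ = f ρ) →
      Tendsto (fun ρ : ℂ => ρ * f ρ) (nhdsWithin 0 {(0 : ℂ)}ᶜ) (nhds (-α / γ))) := by
  have hball : ball (0 : ℂ) ε ∈ 𝓝 0 := ball_mem_nhds 0 hε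
  have hD : ball (0 : ℂ) ε \ {0} ∈ 𝓝[≠] 0 := sdiff_mem_nhdsWithin_compl hball _
  obtain ⟨N, g, hg, hgf⟩ := hmer
  have hmero : MeromorphicAt f 0 :=
    .of_eventually_eq_pow_mul (hg.analyticAt hball) (by simpa using eventually_of_mem hD hgf)
  obtain ⟨u, hu, hu0, hfu⟩ := (meromorphicOrderAt_ne_top_iff hmero).1
    ((meromorphicOrderAt_ne_top_iff_eventually_ne_zero hmero).2 (eventually_of_mem hD hne))
  set c := (meromorphicOrderAt f 0).untop₀
  simp only [sub_zero, smul_eq_mul] at hfu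
  have hpole := painleveIII_simple_pole hγ hu hu0 hfu (eventually_of_mem hD hP3)
  have hρf : (fun ρ => ρ * f ρ) =ᶠ[𝓝[≠] 0] fun ρ => ρ ^ (c + 1) * u ρ := by
    filter_upwards [hfu, self_mem_nhdsWithin] with ρ hρ (hρ0 : ρ ≠ 0)
    rw [hρ, zpow_add_one₀ hρ0]
    ring
  have hext : ∀ {F : ℂ → ℂ} {n : ℤ}, 0 ≤ n → DifferentiableOn ℂ F (ball 0 ε \ {0}) →
      (F =ᶠ[𝓝[≠] 0] fun ρ => ρ ^ n * u ρ) →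
      ∃ h, DifferentiableOn ℂ h (ball 0 ε) ∧ ∀ ρ ∈ ball 0 ε \ {0}, h ρ = F ρ :=
    fun hn hF hFu => exists_differentiableOn_eqOn_of_eventuallyEq_nhdsNE isOpen_ball hF
      ((differentiableAt_zpow.2 (.inr hn)).mul hu.differentiableAt) hFu
  refine ⟨hext ?_ (differentiableOn_id.mul hf) hρf, fun hno => ?_⟩
  · by_contra! hc
    have := (hpole (by omega)).1
    omega
  obtain ⟨hc, hu0⟩ := hpole (not_le.1 fun hc => hno (hext hc hf hfu))
  rw [← hu0]
  refine (hu.continuousAt.tendsto.mono_left nhdsWithin_le_nhds).congr' ?_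
  filter_upwards [hρf] with ρ hρ
  simp [hρ, hc]

/-- Frobenius analysis of Painlevé III at the fixed singularity: a nowhere-zero
holomorphic solution on a punctured disc around `0` that is meromorphic at `0`
(with `α ≠ 0`, `γ ≠ 0`) has at most a simple pole at `0`, and if it has a pole
then `ρ f(ρ) → −α/γ` as `ρ → 0`. -/
theorem painleveIII_frobenius (α β γ δ : ℂ) (hα : α ≠ 0) (hγ : γ ≠ 0)
    (ε : ℝ) (hε : 0 < ε) (f : ℂ → ℂ)
    (hf : DifferentiableOn ℂ f (ball (0 : ℂ) ε \ {0}))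
    (hne : ∀ ρ ∈ ball (0 : ℂ) ε \ {0}, f ρ ≠ 0)
    (hmer : ∃ (N : ℕ) (g : ℂ → ℂ), DifferentiableOn ℂ g (ball (0 : ℂ) ε) ∧
      ∀ ρ ∈ ball (0 : ℂ) ε \ {0}, g ρ = ρ ^ N * f ρ)
    (hP3 : ∀ ρ ∈ ball (0 : ℂ) ε \ {0},
      deriv (deriv f) ρ =
        (deriv f ρ) ^ 2 / f ρ - deriv f ρ / ρ + (α * (f ρ) ^ 2 + β) / ρ
          + γ * (f ρ) ^ 3 + δ / f ρ) :
    (∃ h : ℂ → ℂ, DifferentiableOn ℂ h (ball (0 : ℂ) ε) ∧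
      ∀ ρ ∈ ball (0 : ℂ) ε \ {0}, h ρ = ρ * f ρ) ∧
    ((¬ ∃ g : ℂ → ℂ, DifferentiableOn ℂ g (ball (0 : ℂ) ε) ∧
        ∀ ρ ∈ ball (0 : ℂ) ε \ {0}, g ρ = f ρ) →
      Tendsto (fun ρ : ℂ => ρ * f ρ) (nhdsWithin 0 {(0 : ℂ)}ᶜ) (nhds (-α / γ))) :=
  painleveIII_frobenius_general α β γ δ hγ ε hε f hf hne hmer hP3
end
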